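/- Any finite execution α of the multi-writer auditable register implementation (Algorithm 1) can be decomposed, for some k ≥ 0, as either D0 ρ0 E0 μ1 D1 ρ1 E1 … μk Dk or D0 ρ0 E0 μ1 D1 ρ1 E1 … μk Dk ρk Ek, where ρℓ is the first step writing a w-tuple to SLR[ℓ], μℓ is the step changing M.widx from ℓ−1 to ℓ, in every configuration in Dℓ one has M.widx = ℓ = WIDX + 1, and in every configuration in Eℓ one has M.widx = ℓ = WIDX, where WIDX denotes the largest index of a sliding register containing a w-tuple. -/

import Mathlib

/-!
# An operational model of Algorithm 1 (multi-writer auditable register)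

The algorithm implements an `n`-writer `m`-reader auditable register from an
unbounded array `SLR[-1,0,1,...]` of `(m+n)`-sliding registers, a max register
`M` storing a triple `(widx, ridx, auditset)` (ordered by its first field,
modelled here as an atomic object), and an array `H[1..m]` of single-writer
registers.  Each line of the pseudo-code is a step; readers, writers and
auditors are modelled by explicit program counters, and executions are
alternating sequences of configurations and labelled steps starting from the
initial configuration.
-/

namespace Alg1

/-- Values stored in the auditable register. -/
abbrev Val := ℕ

/-- Entries of the sliding registers: `w`-tuples `(w, j, v, h)` posted by
    writers (with `h` a helping set of readers) and reader identifiers. -/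
inductive Entry (m n : ℕ) where
  | w (j : Fin n) (v : Val) (h : Finset (Fin m))
  | r (i : Fin m)

variable {m n : ℕ}

def Entry.isW : Entry m n → Bool
  | .w _ _ _ => true
  | .r _ => false

/-- Does the window contain a `w`-tuple? -/
def hasW (win : List (Entry m n)) : Bool := win.any Entry.isW

/-- The first `w`-tuple in a window, if any. -/
def firstW : List (Entry m n) → Option (Fin n × Val × Finset (Fin m))
  | [] => none
  | .w j v h :: _ => some (j, v, h)
  | .r _ :: rest => firstW rest

/-- `getValue`: the value of the first `w`-tuple of a window (default `0`). -/
def wval (win : List (Entry m n)) : Val := ((firstW win).map fun t => t.2.1).getD 0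

/-- Reader identifiers that precede every `w`-tuple of a window. -/
def preW : List (Entry m n) → Finset (Fin m)
  | [] => ∅
  | .w _ _ _ :: _ => ∅
  | .r i :: rest => insert i (preW rest)

/-- `READERS(win)`: readers preceding every `w`-tuple, together with the
    helping set of the first `w`-tuple, if any. -/
def readersOf (win : List (Entry m n)) : Finset (Fin m) :=
  preW win ∪ ((firstW win).map fun t => t.2.2).getD ∅

/-- Content of the max register `M`: a triple `(widx, ridx, auditset)`,
    ordered by the first field. -/
structure MVal (m : ℕ) where
  widx : ℤ
  ridx : Fin m → ℤ
  aud : Finset (Fin m × Val)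

/-- Semantics of `writeMax` on `M`. -/
def wmax (old new : MVal m) : MVal m := if old.widx < new.widx then new else old

/-- The triple written to `M` after reading window `win` from `SLR[x]`:
    `(x+1, ridx[j ∈ READERS(win)] := x, auditset ∪ {(j, lv) : j ∈ READERS(win)})`. -/
def mArg (mc : MVal m) (win : List (Entry m n)) (x : ℤ) (lv : Val) : MVal m where
  widx := x + 1
  ridx := fun j => if j ∈ readersOf win then x else mc.ridx j
  aud := mc.aud ∪ (readersOf win).image fun j => (j, lv)

/-- Write to a `k`-sliding register: append, keeping the last `k` entries. -/
def slide (k : ℕ) (l : List (Entry m n)) (e : Entry m n) : List (Entry m n) :=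
  let l' := l ++ [e]
  l'.drop (l'.length - k)

/-- Program counter of a reader (one state per line of the pseudo-code). -/
inductive RPC where
  | idle
  | precheck   -- read `SLR[lsr]` (line `rd_last_wd`)
  | preM       -- read `M` (line `new_write`)
  | preHelp    -- `writeMax` on `M` (line `rd_help_M1`)
  | loopM      -- read `M` at the head of the repeat loop (line `rd_M`)
  | helpVal    -- found help: read `SLR[lsr-1]` (`getValue`, line `rd_return_help`)
  | annH       -- write `H[i] := lsr` (line `rd_annouce_att`)
  | wSLR       -- write `i` to `SLR[lsr]` (line `rd_do_att`)
  | rSLR       -- read `SLR[lsr]` (line `rd_do_att`)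
  | gVal       -- read `SLR[lsr-1]` (`getValue`, line `rd_val`)
  | helpChk    -- help the pending write to complete (line `rd_help_M2`)
  | loopEnd    -- evaluate the until condition (line `rd_att_success`)
  | retNow     -- return `lval`

structure RState (m n : ℕ) where
  lsr : ℤ
  lval : Val
  mc : MVal m
  win : List (Entry m n)
  it : ℕ          -- number of iterations of the repeat loop of the current READ
  pc : RPC

/-- Program counter of a writer. -/
inductive WPC where
  | idle
  | readM    -- read `M` (line `w_read_M`)
  | scanH    -- read `H[k]` (line `w_att`)
  | scanS    -- read `SLR[a_k]` (line `w_help_wd`)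
  | post     -- write the `w`-tuple to `SLR[widx]` (line `w_write_SLR`)
  | postR    -- read `SLR[widx]`
  | postV    -- read `SLR[widx-1]` (`getValue`)
  | postM    -- `writeMax` on `M` (line `w_write_M`)
  | wret     -- return

structure WState (m n : ℕ) where
  v : Val
  mc : MVal m
  toHelp : Finset (Fin m)
  k : ℕ
  a : ℤ
  win : List (Entry m n)
  val : Val
  pc : WPC

/-- Program counter of an auditor. -/
inductive APC where
  | idle
  | aM       -- read `M` (line `adt_read_M`)
  | aR       -- read `SLR[widx]` (line `adt_val`)
  | aV       -- read `SLR[widx-1]` (`getValue`, line `adt_val`)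
  | aret     -- return the audit set

structure AState (m n : ℕ) where
  mc : MVal m
  win : List (Entry m n)
  val : Val
  pc : APC

/-- Processes: `m` readers, `n` writers, and arbitrarily many auditors. -/
inductive Proc (m n : ℕ) where
  | rdr (i : Fin m)
  | wtr (j : Fin n)
  | adt (a : ℕ)
  deriving DecidableEq

/-- A configuration: shared memory plus the local state of every process. -/
structure Config (m n : ℕ) where
  slr : ℤ → List (Entry m n)
  M : MVal m
  H : Fin m → ℤ
  rst : Fin m → RState m n
  wst : Fin n → WState m n
  ast : ℕ → AState m n

/-- Step labels: invocations and responses of high-level operations, and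
    primitive operations applied to the base objects. -/
inductive Lbl (m n : ℕ) where
  | invRead (i : Fin m)
  | respRead (i : Fin m) (v : Val)
  | invWrite (j : Fin n) (v : Val)
  | respWrite (j : Fin n)
  | invAudit (a : ℕ)
  | respAudit (a : ℕ) (A : Finset (Fin m × Val))
  | slrRead (p : Proc m n) (x : ℤ) (win : List (Entry m n))
  | slrWrite (p : Proc m n) (x : ℤ) (e : Entry m n)
  | mRead (p : Proc m n) (v : MVal m)
  | mWrite (p : Proc m n) (v : MVal m)
  | hRead (j : Fin n) (k : Fin m) (a : ℤ)
  | hWrite (i : Fin m) (x : ℤ)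
  | tau (p : Proc m n)

def upR (c : Config m n) (i : Fin m) (s : RState m n) : Config m n :=
  { c with rst := Function.update c.rst i s }

def upW (c : Config m n) (j : Fin n) (s : WState m n) : Config m n :=
  { c with wst := Function.update c.wst j s }

def upA (c : Config m n) (a : ℕ) (s : AState m n) : Config m n :=
  { c with ast := Function.update c.ast a s }

/-- The transition relation of Algorithm 1. -/
def Step (c : Config m n) (l : Lbl m n) (c' : Config m n) : Prop :=
  match l with
  | .invRead i =>
      let s := c.rst i
      s.pc = .idle ∧
      c' = upR c i { s with it := 0, pc := if 0 ≤ s.lsr then RPC.precheck else RPC.loopM }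
  | .respRead i v =>
      let s := c.rst i
      s.pc = .retNow ∧ v = s.lval ∧ c' = upR c i { s with pc := .idle }
  | .invWrite j v =>
      let s := c.wst j
      s.pc = .idle ∧ c' = upW c j { s with v := v, pc := .readM }
  | .respWrite j =>
      let s := c.wst j
      s.pc = .wret ∧ c' = upW c j { s with pc := .idle }
  | .invAudit a =>
      let s := c.ast a
      s.pc = .idle ∧ c' = upA c a { s with pc := .aM }
  | .respAudit a A =>
      let s := c.ast a
      s.pc = .aret ∧
      A = s.mc.aud ∪ (readersOf s.win).image (fun j => (j, s.val)) ∧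
      c' = upA c a { s with pc := .idle }
  | .slrRead p x win =>
      win = c.slr x ∧
      (match p with
       | .rdr i =>
          let s := c.rst i
          (s.pc = .precheck ∧ x = s.lsr ∧
             c' = upR c i { s with win := win, pc := if hasW win then RPC.preM else RPC.retNow }) ∨
          (s.pc = .helpVal ∧ x = s.lsr - 1 ∧
             c' = upR c i { s with lval := wval win, pc := .retNow }) ∨
          (s.pc = .rSLR ∧ x = s.lsr ∧
             c' = upR c i { s with win := win, pc := .gVal }) ∨
          (s.pc = .gVal ∧ x = s.lsr - 1 ∧
             c' = upR c i { s with lval := wval win, pc := .helpChk })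
       | .wtr j =>
          let s := c.wst j
          (s.pc = .scanS ∧ x = s.a ∧
             (∃ hk : s.k < m,
               c' = upW c j { s with toHelp := if (⟨s.k, hk⟩ : Fin m) ∈ readersOf win then s.toHelp else insert (⟨s.k, hk⟩ : Fin m) s.toHelp, k := s.k + 1, pc := .scanH })) ∨
          (s.pc = .postR ∧ x = s.mc.widx ∧
             c' = upW c j { s with win := win, pc := .postV }) ∨
          (s.pc = .postV ∧ x = s.mc.widx - 1 ∧
             c' = upW c j { s with val := wval win, pc := .postM })
       | .adt a =>
          let s := c.ast a
          (s.pc = .aR ∧ x = s.mc.widx ∧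
             c' = upA c a { s with win := win, pc := .aV }) ∨
          (s.pc = .aV ∧ x = s.mc.widx - 1 ∧
             c' = upA c a { s with val := wval win, pc := .aret }))
  | .slrWrite p x e =>
      (match p with
       | .rdr i =>
          let s := c.rst i
          s.pc = .wSLR ∧ x = s.lsr ∧ e = .r i ∧
          c' = { upR c i { s with pc := .rSLR } with
                 slr := Function.update c.slr x (slide (m + n) (c.slr x) e) }
       | .wtr j =>
          let s := c.wst j
          s.pc = .post ∧ x = s.mc.widx ∧ e = .w j s.v s.toHelp ∧
          c' = { upW c j { s with pc := .postR } with
                 slr := Function.update c.slr x (slide (m + n) (c.slr x) e) }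
       | .adt _ => False)
  | .mRead p v =>
      v = c.M ∧
      (match p with
       | .rdr i =>
          let s := c.rst i
          (s.pc = .preM ∧
             c' = upR c i { s with mc := v, pc := if v.widx = s.lsr then RPC.preHelp else RPC.loopM }) ∨
          (s.pc = .loopM ∧
             c' = upR c i (if s.lsr < v.ridx i then
                { s with mc := v, it := s.it + 1, lsr := v.ridx i, pc := .helpVal }
              else
                { s with mc := v, it := s.it + 1, lsr := v.widx, pc := .annH }))
       | .wtr j =>
          let s := c.wst j
          s.pc = .readM ∧
          c' = upW c j { s with mc := v, toHelp := ∅, k := 0, pc := .scanH }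
       | .adt a =>
          let s := c.ast a
          s.pc = .aM ∧ c' = upA c a { s with mc := v, pc := .aR })
  | .mWrite p v =>
      (match p with
       | .rdr i =>
          let s := c.rst i
          (s.pc = .preHelp ∧ v = mArg s.mc s.win s.lsr s.lval ∧
             c' = { upR c i { s with pc := .loopM } with M := wmax c.M v }) ∨
          (s.pc = .helpChk ∧ hasW s.win = true ∧ v = mArg s.mc s.win s.lsr s.lval ∧
             c' = { upR c i { s with pc := .loopEnd } with M := wmax c.M v })
       | .wtr j =>
          let s := c.wst j
          s.pc = .postM ∧ v = mArg s.mc s.win s.mc.widx s.val ∧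
          c' = { upW c j { s with pc := .wret } with M := wmax c.M v }
       | .adt _ => False)
  | .hRead j k a =>
      let s := c.wst j
      s.pc = .scanH ∧ (k : ℕ) = s.k ∧ a = c.H k ∧
      c' = upW c j (if s.mc.ridx k < a then { s with a := a, pc := .scanS }
                    else { s with k := s.k + 1 })
  | .hWrite i x =>
      let s := c.rst i
      s.pc = .annH ∧ x = s.lsr ∧
      c' = { upR c i { s with pc := .wSLR } with H := Function.update c.H i x }
  | .tau p =>
      match p with
      | .rdr i =>
          let s := c.rst i
          (s.pc = .helpChk ∧ hasW s.win = false ∧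
             c' = upR c i { s with pc := .loopEnd }) ∨
          (s.pc = .loopEnd ∧
             c' = upR c i { s with pc := if i ∈ readersOf s.win then RPC.retNow else RPC.loopM })
      | .wtr j =>
          let s := c.wst j
          s.pc = .scanH ∧ s.k = m ∧ c' = upW c j { s with pc := .post }
      | .adt _ => False

/-- The initial configuration: `SLR[-1]` holds `(w, j₀, v₀, ∅)`, all other
    sliding registers are empty, `M = (0, [-1,…,-1], ∅)`, `H = [-1,…,-1]`,
    and every process is idle (readers start with `lsr = -1`). -/
def init (m n : ℕ) (v0 : Val) (j0 : Fin n) : Config m n where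
  slr := fun x => if x = -1 then [.w j0 v0 ∅] else []
  M := ⟨0, fun _ => -1, ∅⟩
  H := fun _ => -1
  rst := fun _ => ⟨-1, v0, ⟨0, fun _ => -1, ∅⟩, [], 0, .idle⟩
  wst := fun _ => ⟨v0, ⟨0, fun _ => -1, ∅⟩, ∅, 0, -1, [], v0, .idle⟩
  ast := fun _ => ⟨⟨0, fun _ => -1, ∅⟩, [], v0, .idle⟩

/-- A finite execution of Algorithm 1: configurations `cfg 0, …, cfg len`
    connected by labelled steps. -/
structure Exec (m n : ℕ) (v0 : Val) (j0 : Fin n) where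
  len : ℕ
  cfg : ℕ → Config m n
  lbl : ℕ → Lbl m n
  h0 : cfg 0 = init m n v0 j0
  hstep : ∀ t, t < len → Step (cfg t) (lbl t) (cfg (t + 1))

variable {v0 : Val} {j0 : Fin n}

/-! ### Derived notions -/

/-- The process performing a step. -/
def procOf : Lbl m n → Proc m n
  | .invRead i => .rdr i
  | .respRead i _ => .rdr i
  | .invWrite j _ => .wtr j
  | .respWrite j => .wtr j
  | .invAudit a => .adt a
  | .respAudit a _ => .adt a
  | .slrRead p _ _ => p
  | .slrWrite p _ _ => p
  | .mRead p _ => p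
  | .mWrite p _ => p
  | .hRead j _ _ => .wtr j
  | .hWrite i _ => .rdr i
  | .tau p => p

/-- The label writes a `w`-tuple to `SLR[x]`. -/
def isWWrite (l : Lbl m n) (x : ℤ) : Prop :=
  ∃ p j v h, l = .slrWrite p x (.w j v h)

/-- Step `t` is the first write of a `w`-tuple to `SLR[x]` in the execution. -/
def FirstWWriteAt (E : Exec m n v0 j0) (x : ℤ) (t : ℕ) : Prop :=
  t < E.len ∧ isWWrite (E.lbl t) x ∧ ∀ t', t' < t → ¬ isWWrite (E.lbl t') x

/-- Step `t` changes `M.widx` from `ℓ - 1` to `ℓ`. -/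
def WidxChangeAt (E : Exec m n v0 j0) (ℓ : ℤ) (t : ℕ) : Prop :=
  t < E.len ∧ (∃ p v, E.lbl t = .mWrite p v) ∧
  (E.cfg t).M.widx = ℓ - 1 ∧ (E.cfg (t + 1)).M.widx = ℓ

/-- `x` is the largest index of a sliding register containing a `w`-tuple. -/
def WIDXis (c : Config m n) (x : ℤ) : Prop :=
  hasW (c.slr x) = true ∧ ∀ y : ℤ, x < y → hasW (c.slr y) = false

/-- Configuration in region `D_ℓ`: `M.widx = ℓ = WIDX + 1`. -/
def inD (c : Config m n) (ℓ : ℤ) : Prop := c.M.widx = ℓ ∧ WIDXis c (ℓ - 1)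

/-- Configuration in region `E_ℓ`: `M.widx = ℓ = WIDX`. -/
def inE (c : Config m n) (ℓ : ℤ) : Prop := c.M.widx = ℓ ∧ WIDXis c ℓ

/-! ### Classification of operations, and linearizations -/

/-- Classification of the operations of Algorithm 1. -/
inductive Kind where
  | silentR | directR | helpedR | visibleW | hiddenW | defA | nondefA
  deriving DecidableEq

/-- Rank used by the linearization rules `R1`–`R4` within a block of
    operations with the same index. -/
def rank : Kind → ℕ
  | .silentR => 0
  | .directR => 0
  | .nondefA => 0
  | .helpedR => 1
  | .defA => 2
  | .hiddenW => 3
  | .visibleW => 4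

def Kind.isRead : Kind → Prop
  | .silentR => True | .directR => True | .helpedR => True
  | _ => False

def Kind.isWrite : Kind → Prop
  | .visibleW => True | .hiddenW => True
  | _ => False

def Kind.isAudit : Kind → Prop
  | .defA => True | .nondefA => True
  | _ => False

/-- The data of a classified operation: its process, invocation step, optional
    response step, kind, associated sliding-register index `idx`, its
    characteristic step `key` on `SLR[idx]` (used by the linearization rules),
    its value (return value of a READ / input of a WRITE) and, for an AUDIT,
    the returned audit set. -/
structure OpData (m n : ℕ) where
  proc : Proc m n
  inv : ℕ
  resp : Option ℕ
  kind : Kind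
  idx : ℤ
  key : ℕ
  val : Val
  aset : Finset (Fin m × Val)

/-- The label is a response event of process `p`. -/
def isRespOf (l : Lbl m n) (p : Proc m n) : Prop :=
  (∃ i v, p = .rdr i ∧ l = .respRead i v) ∨
  (∃ j, p = .wtr j ∧ l = .respWrite j) ∨
  (∃ a A, p = .adt a ∧ l = .respAudit a A)

/-- `resp` is the matching response of the operation of `p` invoked at `a`
    (or the operation is pending if `resp = none`). -/
def RespMatch (E : Exec m n v0 j0) (p : Proc m n) (a : ℕ) : Option ℕ → Prop
  | some b => a < b ∧ b < E.len ∧ isRespOf (E.lbl b) p ∧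
      ∀ t, a < t → t < b → ¬ isRespOf (E.lbl t) p
  | none => ∀ t, a < t → t < E.len → ¬ isRespOf (E.lbl t) p

/-- `x` is the smallest index `> x0` of a sliding register in which reader `i`
    is recorded (evaluated in the final configuration). -/
def minRecIdx (E : Exec m n v0 j0) (i : Fin m) (x0 x : ℤ) : Prop :=
  x0 < x ∧ i ∈ readersOf ((E.cfg E.len).slr x) ∧
    ∀ y : ℤ, x0 < y → y < x → i ∉ readersOf ((E.cfg E.len).slr y)

/-- The return value of a classified READ: the actual response if the READ is
    complete; for a pending classified READ (completed in `H'`), the value of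
    the first `w`-tuple of `SLR[idx-1]`. -/
def ReadValOK (E : Exec m n v0 j0) (o : OpData m n) (i : Fin m) : Prop :=
  match o.resp with
  | some b => E.lbl b = .respRead i o.val
  | none => o.val = wval ((E.cfg E.len).slr (o.idx - 1))

/-- `o` describes a classified operation of the execution `E`. -/
def IsOp (E : Exec m n v0 j0) (o : OpData m n) : Prop :=
  o.inv < E.len ∧ RespMatch E o.proc o.inv o.resp ∧
  match o.kind with
  | .silentR =>
      ∃ i b win, o.proc = .rdr i ∧ o.resp = some b ∧
        E.lbl o.inv = .invRead i ∧
        (∃ t', t' < o.inv ∧ E.lbl t' = .invRead i) ∧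
        o.idx = ((E.cfg o.inv).rst i).lsr ∧
        o.inv < o.key ∧ o.key < b ∧
        E.lbl o.key = .slrRead (.rdr i) o.idx win ∧
        ((E.cfg o.key).rst i).pc = .precheck ∧
        hasW win = false ∧
        E.lbl b = .respRead i o.val ∧
        o.aset = ∅
  | .directR =>
      ∃ i, o.proc = .rdr i ∧ E.lbl o.inv = .invRead i ∧
        minRecIdx E i ((E.cfg o.inv).rst i).lsr o.idx ∧
        i ∈ preW ((E.cfg E.len).slr o.idx) ∧
        o.inv < o.key ∧ o.key < E.len ∧
        E.lbl o.key = .slrWrite (.rdr i) o.idx (.r i) ∧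
        (∀ b, o.resp = some b → o.key < b) ∧
        ReadValOK E o i ∧ o.aset = ∅
  | .helpedR =>
      ∃ i, o.proc = .rdr i ∧ E.lbl o.inv = .invRead i ∧
        minRecIdx E i ((E.cfg o.inv).rst i).lsr o.idx ∧
        i ∉ preW ((E.cfg E.len).slr o.idx) ∧
        o.key = o.inv ∧ ReadValOK E o i ∧ o.aset = ∅
  | .visibleW =>
      ∃ j h, o.proc = .wtr j ∧ E.lbl o.inv = .invWrite j o.val ∧
        o.inv < o.key ∧ o.key < E.len ∧
        E.lbl o.key = .slrWrite (.wtr j) o.idx (.w j o.val h) ∧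
        (∀ b, o.resp = some b → o.key < b) ∧
        firstW ((E.cfg E.len).slr o.idx) = some (j, o.val, h) ∧
        o.aset = ∅
  | .hiddenW =>
      ∃ j h, o.proc = .wtr j ∧ E.lbl o.inv = .invWrite j o.val ∧
        o.inv < o.key ∧ o.key < E.len ∧
        E.lbl o.key = .slrWrite (.wtr j) o.idx (.w j o.val h) ∧
        (∀ b, o.resp = some b → o.key < b) ∧
        firstW ((E.cfg E.len).slr o.idx) ≠ some (j, o.val, h) ∧
        o.aset = ∅
  | .defA =>
      ∃ a b tM mv win, o.proc = .adt a ∧ o.resp = some b ∧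
        E.lbl o.inv = .invAudit a ∧
        o.inv < tM ∧ tM < o.key ∧ o.key < b ∧
        E.lbl tM = .mRead (.adt a) mv ∧ ((E.cfg tM).ast a).pc = .aM ∧
        o.idx = mv.widx ∧
        E.lbl o.key = .slrRead (.adt a) o.idx win ∧
        ((E.cfg o.key).ast a).pc = .aR ∧
        hasW win = true ∧
        E.lbl b = .respAudit a o.aset ∧ o.val = 0
  | .nondefA =>
      ∃ a b tM mv win, o.proc = .adt a ∧ o.resp = some b ∧
        E.lbl o.inv = .invAudit a ∧
        o.inv < tM ∧ tM < o.key ∧ o.key < b ∧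
        E.lbl tM = .mRead (.adt a) mv ∧ ((E.cfg tM).ast a).pc = .aM ∧
        o.idx = mv.widx ∧
        E.lbl o.key = .slrRead (.adt a) o.idx win ∧
        ((E.cfg o.key).ast a).pc = .aR ∧
        hasW win = false ∧
        E.lbl b = .respAudit a o.aset ∧ o.val = 0

/-- `o` terminates (its response event occurs) before `o'` starts. -/
def EndsBefore (o o' : OpData m n) : Prop :=
  ∃ b, o.resp = some b ∧ b < o'.inv

/-- `lt` is a linearization of the classified operations of `E` obeying the
    rules `R0`–`R4`: a strict total order on classified operations, ordering
    operations by increasing `idx` (`R0`); within the same `idx`, first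
    silent READs, direct READs and non-definitive AUDITs ordered by their
    characteristic step on `SLR[idx]` (`R1`), then helped READs in arbitrary
    order followed by the definitive AUDITs ordered by their read of
    `SLR[idx]` (`R2`), then the hidden WRITEs ordered by their write to
    `SLR[idx]` (`R3`), and the visible WRITE last (`R4`). -/
def LinOK (E : Exec m n v0 j0) (lt : OpData m n → OpData m n → Prop) : Prop :=
  (∀ o, IsOp E o → ¬ lt o o) ∧
  (∀ o₁ o₂ o₃, IsOp E o₁ → IsOp E o₂ → IsOp E o₃ →
      lt o₁ o₂ → lt o₂ o₃ → lt o₁ o₃) ∧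
  (∀ o₁ o₂, IsOp E o₁ → IsOp E o₂ → o₁ ≠ o₂ → lt o₁ o₂ ∨ lt o₂ o₁) ∧
  (∀ o₁ o₂, IsOp E o₁ → IsOp E o₂ → o₁.idx < o₂.idx → lt o₁ o₂) ∧
  (∀ o₁ o₂, IsOp E o₁ → IsOp E o₂ → o₁.idx = o₂.idx →
      rank o₁.kind < rank o₂.kind → lt o₁ o₂) ∧
  (∀ o₁ o₂, IsOp E o₁ → IsOp E o₂ → o₁.idx = o₂.idx →
      rank o₁.kind = rank o₂.kind → o₁.kind ≠ .helpedR →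
      o₁.key < o₂.key → lt o₁ o₂)

/-! ### Auxiliary infrastructure for the proof -/

section Infra

def owner : Entry m n → Fin m ⊕ Fin n
  | .w j _ _ => .inr j
  | .r i => .inl i

def ownIn (c : Config m n) (o : Fin m ⊕ Fin n) (x : ℤ) : Prop :=
  o ∈ (c.slr x).map owner

theorem hasW_append (l : List (Entry m n)) (e : Entry m n) :
    hasW (l ++ [e]) = (hasW l || e.isW) := by
  simp [hasW, List.any_append]

theorem slide_eq_append (l : List (Entry m n)) (e : Entry m n) (h : l.length < m + n) :
    slide (m + n) l e = l ++ [e] := by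
  show (l ++ [e]).drop ((l ++ [e]).length - (m + n)) = l ++ [e]
  rw [List.length_append, List.length_singleton,
    show l.length + 1 - (m + n) = 0 from by omega, List.drop_zero]

theorem length_lt_of_fresh {l : List (Entry m n)} (hnd : (l.map owner).Nodup)
    (e : Entry m n) (hf : owner e ∉ l.map owner) : l.length < m + n := by
  by_contra h
  push_neg at h
  have hle : (l.map owner).length ≤ m + n := by
    have := hnd.length_le_card
    simpa using this
  have hlen : (l.map owner).length = m + n := by
    simp only [List.length_map]
    simp only [List.length_map] at hle
    omega
  have hcard : Fintype.card (Fin m ⊕ Fin n) = m + n := by simp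
  have huniv : (l.map owner).toFinset = Finset.univ := by
    apply Finset.eq_univ_of_card
    rw [List.toFinset_card_of_nodup hnd, hlen, hcard]
  have : owner e ∈ (l.map owner).toFinset := by rw [huniv]; exact Finset.mem_univ _
  exact hf (List.mem_toFinset.mp this)

theorem readersOf_cons_r (i' : Fin m) (rest : List (Entry m n)) :
    readersOf rest ⊆ readersOf (Entry.r i' :: rest) := by
  simp only [readersOf, preW, firstW]
  exact Finset.union_subset_union (Finset.subset_insert _ _) le_rfl

theorem hasW_of_mem_not_readers {win : List (Entry m n)} {i : Fin m}
    (hm : Entry.r i ∈ win) (hn : i ∉ readersOf win) : hasW win = true := by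
  induction win with
  | nil => simp at hm
  | cons a rest ih =>
    cases a with
    | w j v h => simp [hasW, Entry.isW]
    | r i' =>
      rcases List.mem_cons.mp hm with heq | hmem
      · have : i = i' := by injection heq
        subst this
        exact absurd (by
          simp only [readersOf, preW]
          exact Finset.mem_union_left _ (Finset.mem_insert_self _ _)) hn
      · have h1 : hasW rest = true := ih hmem (fun hx => hn (readersOf_cons_r i' rest hx))
        simp only [hasW, List.any_cons]
        simp only [hasW] at h1
        rw [h1, Bool.or_true]

/-- Per-reader invariant. -/
structure RInv (c : Config m n) (i : Fin m) : Prop where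
  mcwf : ∀ k, ((c.rst i).mc.ridx k) < (c.rst i).mc.widx
  lsrle : (c.rst i).lsr ≤ c.M.widx
  own : ∀ x, ownIn c (.inl i) x → x ≤ (c.rst i).lsr
  ownlt : (c.rst i).pc = .annH ∨ (c.rst i).pc = .wSLR →
    ∀ x, ownIn c (.inl i) x → x < (c.rst i).lsr
  ownlm : (c.rst i).pc = .loopM → ∀ x, ownIn c (.inl i) x → x < c.M.widx
  mceq : ((c.rst i).pc = .preHelp ∨ (c.rst i).pc = .annH ∨ (c.rst i).pc = .wSLR ∨
      (c.rst i).pc = .rSLR ∨ (c.rst i).pc = .gVal ∨ (c.rst i).pc = .helpChk) →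
    (c.rst i).mc.widx = (c.rst i).lsr
  memwin : ((c.rst i).pc = .gVal ∨ (c.rst i).pc = .helpChk ∨ (c.rst i).pc = .loopEnd) →
    Entry.r i ∈ (c.rst i).win
  memslr : (c.rst i).pc = .rSLR → Entry.r i ∈ c.slr (c.rst i).lsr
  htop : ((c.rst i).pc = .preM ∨ (c.rst i).pc = .preHelp) →
    hasW (c.slr (c.rst i).lsr) = true
  hwin : ((c.rst i).pc = .gVal ∨ (c.rst i).pc = .helpChk) →
    hasW (c.rst i).win = true → hasW (c.slr (c.rst i).lsr) = true
  lend : (c.rst i).pc = .loopEnd → hasW (c.rst i).win = true → (c.rst i).lsr < c.M.widx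

/-- Per-writer invariant. -/
structure WInv (c : Config m n) (j : Fin n) : Prop where
  mcwf : ∀ k, (c.wst j).mc.ridx k < (c.wst j).mc.widx
  mc0 : 0 ≤ (c.wst j).mc.widx
  mcle : (c.wst j).mc.widx ≤ c.M.widx
  ownA : ((c.wst j).pc = .idle ∨ (c.wst j).pc = .readM ∨ (c.wst j).pc = .wret) →
    ∀ x, ownIn c (.inr j) x → x < c.M.widx
  ownB : ((c.wst j).pc = .scanH ∨ (c.wst j).pc = .scanS ∨ (c.wst j).pc = .post) →
    ∀ x, ownIn c (.inr j) x → x < (c.wst j).mc.widx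
  ownC : ((c.wst j).pc = .postR ∨ (c.wst j).pc = .postV ∨ (c.wst j).pc = .postM) →
    (∀ x, ownIn c (.inr j) x → x ≤ (c.wst j).mc.widx) ∧
      hasW (c.slr (c.wst j).mc.widx) = true

/-- The global invariant. -/
structure Inv (c : Config m n) : Prop where
  mwf : ∀ i, c.M.ridx i < c.M.widx
  mpos : 0 ≤ c.M.widx
  nodup : ∀ x, ((c.slr x).map owner).Nodup
  top : ∀ x, c.M.widx < x → hasW (c.slr x) = false
  cur : hasW (c.slr (c.M.widx - 1)) = true
  rdr : ∀ i, RInv c i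
  wtr : ∀ j, WInv c j

theorem inv_init (v0 : Val) (j0 : Fin n) : Inv (init m n v0 j0) := by
  have hsl : ∀ x : ℤ, (init m n v0 j0).slr x = if x = -1 then [.w j0 v0 ∅] else [] :=
    fun x => rfl
  have hM : (init m n v0 j0).M.widx = 0 := rfl
  have hR : ∀ i, ((init m n v0 j0).rst i).pc = RPC.idle := fun _ => rfl
  have hW : ∀ j, ((init m n v0 j0).wst j).pc = WPC.idle := fun _ => rfl
  have hown : ∀ (o : Fin m ⊕ Fin n) x, ownIn (init m n v0 j0) o x → o = .inr j0 ∧ x = -1 := by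
    intro o x h
    simp only [ownIn, hsl] at h
    by_cases hx : x = -1
    · rw [if_pos hx] at h
      simp only [List.map_cons, List.map_nil, List.mem_singleton] at h
      exact ⟨by rw [h]; rfl, hx⟩
    · rw [if_neg hx] at h; simp at h
  constructor
  · intro i; rw [hM]; exact show (-1:ℤ) < 0 by norm_num
  · rw [hM]
  · intro x; rw [hsl]; split <;> simp
  · intro x hx; rw [hM] at hx; rw [hsl, if_neg (by omega)]; rfl
  · rw [hM, hsl]; rw [if_pos (by norm_num)]; rfl
  · intro i
    refine ⟨fun k => ?_, ?_, fun x hx => absurd (hown _ _ hx).1 (by simp), ?_, ?_, ?_, ?_, ?_, ?_, ?_, ?_⟩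
    · exact show (-1:ℤ) < 0 by norm_num
    · exact show (-1:ℤ) ≤ 0 by norm_num
    · intro h; rw [hR] at h; rcases h with h|h <;> simp at h
    · intro h; rw [hR] at h; simp at h
    · intro h; rw [hR] at h; rcases h with h|h|h|h|h|h <;> simp at h
    · intro h; rw [hR] at h; rcases h with h|h|h <;> simp at h
    · intro h; rw [hR] at h; simp at h
    · intro h; rw [hR] at h; rcases h with h|h <;> simp at h
    · intro h; rw [hR] at h; rcases h with h|h <;> simp at h
    · intro h; rw [hR] at h; simp at h
  · intro j
    refine ⟨fun k => ?_, ?_, ?_, ?_, ?_, ?_⟩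
    · exact show (-1:ℤ) < 0 by norm_num
    · exact show (0:ℤ) ≤ 0 by norm_num
    · rw [hM]; exact show (0:ℤ) ≤ 0 by norm_num
    · intro _ x hx
      rw [hM, (hown _ _ hx).2]; norm_num
    · intro h; rw [hW] at h; rcases h with h|h|h <;> simp at h
    · intro h; rw [hW] at h; rcases h with h|h|h <;> simp at h

/-- Extension relation between configurations: the max register only grows and
each sliding register is unchanged or extended by one entry with owner `o`. -/
def Ext (c c' : Config m n) (P : Fin m ⊕ Fin n → Prop) : Prop :=
  c.M.widx ≤ c'.M.widx ∧
  ∀ x, c'.slr x = c.slr x ∨ ∃ e, P (owner e) ∧ c'.slr x = c.slr x ++ [e]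

theorem Ext.mem {c c' : Config m n} {P} (h : Ext c c' P) {a : Entry m n} {x : ℤ}
    (ha : a ∈ c.slr x) : a ∈ c'.slr x := by
  rcases h.2 x with he | ⟨e, _, he⟩ <;> rw [he] <;> simp [ha]

theorem Ext.hasW {c c' : Config m n} {P} (h : Ext c c' P) {x : ℤ}
    (hw : hasW (c.slr x) = true) : hasW (c'.slr x) = true := by
  rcases h.2 x with he | ⟨e, _, he⟩ <;> rw [he]
  · exact hw
  · rw [hasW_append, hw]; rfl

theorem Ext.ownIn {c c' : Config m n} {P} {o' : Fin m ⊕ Fin n} (h : Ext c c' P)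
    (hne : ¬ P o') {x : ℤ} (ho : ownIn c' o' x) : ownIn c o' x := by
  unfold Alg1.ownIn at ho ⊢
  rcases h.2 x with he | ⟨e, heo, he⟩
  · rwa [he] at ho
  · rw [he] at ho
    simp only [List.map_append, List.map_cons, List.map_nil, List.mem_append,
      List.mem_singleton] at ho
    rcases ho with ho | ho
    · exact ho
    · exact absurd (ho ▸ heo) hne

theorem RInv.ext {c c' : Config m n} {P} {i : Fin m} (h : Ext c c' P)
    (hne : ¬ P (.inl i)) (hr : c'.rst i = c.rst i) (hI : RInv c i) : RInv c' i := by
  constructor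
  · rw [hr]; exact hI.mcwf
  · rw [hr]; exact hI.lsrle.trans h.1
  · rw [hr]; intro x hx; exact hI.own x (h.ownIn hne hx)
  · rw [hr]; intro hp x hx; exact hI.ownlt hp x (h.ownIn hne hx)
  · rw [hr]; intro hp x hx; exact (hI.ownlm hp x (h.ownIn hne hx)).trans_le h.1
  · rw [hr]; exact hI.mceq
  · rw [hr]; exact hI.memwin
  · rw [hr]; intro hp; exact h.mem (hI.memslr hp)
  · rw [hr]; intro hp; exact h.hasW (hI.htop hp)
  · rw [hr]; intro hp hw; exact h.hasW (hI.hwin hp hw)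
  · rw [hr]; intro hp hw; exact (hI.lend hp hw).trans_le h.1

theorem WInv.ext {c c' : Config m n} {P} {j : Fin n} (h : Ext c c' P)
    (hne : ¬ P (.inr j)) (hw : c'.wst j = c.wst j) (hI : WInv c j) : WInv c' j := by
  constructor
  · rw [hw]; exact hI.mcwf
  · rw [hw]; exact hI.mc0
  · rw [hw]; exact hI.mcle.trans h.1
  · rw [hw]; intro hp x hx; exact (hI.ownA hp x (h.ownIn hne hx)).trans_le h.1
  · rw [hw]; intro hp x hx; exact hI.ownB hp x (h.ownIn hne hx)
  · rw [hw]; intro hp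
    exact ⟨fun x hx => (hI.ownC hp).1 x (h.ownIn hne hx), h.hasW (hI.ownC hp).2⟩

theorem ext_of_eq {c c' : Config m n} (P : Fin m ⊕ Fin n → Prop) (h1 : c'.slr = c.slr)
    (h2 : c.M.widx ≤ c'.M.widx) : Ext c c' P :=
  ⟨h2, fun x => Or.inl (by rw [h1])⟩

theorem ext_update {c c' : Config m n} (hM : c.M.widx ≤ c'.M.widx) {x : ℤ} {e : Entry m n}
    (hs : c'.slr = Function.update c.slr x (c.slr x ++ [e])) : Ext c c' (· = owner e) := by
  refine ⟨hM, fun y => ?_⟩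
  by_cases hy : y = x
  · subst hy; right; exact ⟨e, rfl, by rw [hs, Function.update_self]⟩
  · left; rw [hs, Function.update_of_ne hy]

theorem ownIn_update {c c' : Config m n} {x : ℤ} {e : Entry m n}
    (hs : c'.slr = Function.update c.slr x (c.slr x ++ [e])) (o : Fin m ⊕ Fin n) (y : ℤ) :
    ownIn c' o y ↔ ownIn c o y ∨ (y = x ∧ o = owner e) := by
  unfold ownIn
  rw [hs]
  by_cases hy : y = x
  · subst hy
    rw [Function.update_self]
    simp only [List.map_append, List.map_cons, List.map_nil, List.mem_append,
      List.mem_singleton]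
    tauto
  · rw [Function.update_of_ne hy]
    simp [hy]

theorem nodup_concat {α : Type*} {l : List α} {a : α} (h : l.Nodup) (ha : a ∉ l) :
    (l ++ [a]).Nodup := by
  simp [List.nodup_append, h, ha]
  intro b hb hba; exact ha (hba ▸ hb)

/-- The step-fact bundle used in the phase decomposition. -/
def StepFacts (c c' : Config m n) (l : Lbl m n) : Prop :=
  c.M.widx ≤ c'.M.widx ∧
  (c'.M.widx ≠ c.M.widx →
     (∃ p v, l = .mWrite p v) ∧ hasW (c.slr c.M.widx) = true ∧
       c'.M.widx = c.M.widx + 1) ∧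
  (∀ x, hasW (c.slr x) = true → hasW (c'.slr x) = true) ∧
  (∀ x, hasW (c.slr x) = false → hasW (c'.slr x) = true →
     isWWrite l x ∧ x ≤ c.M.widx ∧ c'.M = c.M) ∧
  (∀ x, isWWrite l x → hasW (c'.slr x) = true)

theorem stepFacts_of_eq {c c' : Config m n} {l : Lbl m n} (h1 : c'.slr = c.slr)
    (h2 : c'.M = c.M) (hnw : ∀ x, ¬ isWWrite l x) : StepFacts c c' l := by
  refine ⟨by rw [h2], fun hne => absurd (by rw [h2]) hne, fun x => by rw [h1]; exact id,
    fun x hf ht => ?_, fun x hw => absurd hw (hnw x)⟩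
  rw [h1, hf] at ht
  exact absurd ht (by simp)

theorem wmax_mArg_facts {c : Config m n} (hI : Inv c) (mc : MVal m)
    (win : List (Entry m n)) (y : ℤ) (lv : Val)
    (hwf : ∀ k, mc.ridx k ≤ y) (hhw : hasW (c.slr y) = true) :
    (∀ k, (wmax c.M (mArg mc win y lv)).ridx k < (wmax c.M (mArg mc win y lv)).widx) ∧
    0 ≤ (wmax c.M (mArg mc win y lv)).widx ∧
    c.M.widx ≤ (wmax c.M (mArg mc win y lv)).widx ∧
    (∀ x, (wmax c.M (mArg mc win y lv)).widx < x → hasW (c.slr x) = false) ∧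
    hasW (c.slr ((wmax c.M (mArg mc win y lv)).widx - 1)) = true ∧
    ((wmax c.M (mArg mc win y lv)).widx ≠ c.M.widx →
      hasW (c.slr c.M.widx) = true ∧ (wmax c.M (mArg mc win y lv)).widx = c.M.widx + 1) := by
  have hm0 : (0:ℤ) ≤ c.M.widx := hI.mpos
  have hy : y ≤ c.M.widx := by
    by_contra h
    push_neg at h
    rw [hI.top y h] at hhw
    exact absurd hhw (by simp)
  unfold wmax
  by_cases hlt : c.M.widx < (mArg mc win y lv).widx
  · rw [if_pos hlt]
    have hwidx : (mArg mc win y lv).widx = y + 1 := rfl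
    rw [hwidx] at hlt ⊢
    have hyeq : y = c.M.widx := le_antisymm hy (by omega)
    refine ⟨fun k => ?_, by omega, by omega, fun x hx => hI.top x (by omega), ?_, fun _ => ?_⟩
    · show (if k ∈ readersOf win then y else mc.ridx k) < y + 1
      split
      · omega
      · exact lt_of_le_of_lt (hwf k) (by omega)
    · rw [show y + 1 - 1 = y from by ring]
      exact hhw
    · exact ⟨by rw [← hyeq]; exact hhw, by omega⟩
  · rw [if_neg hlt]
    exact ⟨hI.mwf, hI.mpos, le_refl _, hI.top, hI.cur, fun h => absurd rfl h⟩

theorem ownIn_congr {c c' : Config m n} (h : c'.slr = c.slr) (o : Fin m ⊕ Fin n) (x : ℤ) :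
    ownIn c' o x ↔ ownIn c o x := by
  unfold ownIn; rw [h]

/-- Assemble the invariant for a step that changes neither `slr` nor `M`, nor any
writer state, and changes the state of at most reader `i`. -/
theorem inv_local_r {c c' : Config m n} (hI : Inv c) (i : Fin m)
    (hslr : c'.slr = c.slr) (hM : c'.M = c.M)
    (hrst : ∀ i', i' ≠ i → c'.rst i' = c.rst i')
    (hwst : ∀ j, c'.wst j = c.wst j)
    (hri : RInv c' i) : Inv c' := by
  have he : Ext c c' (fun _ => False) := ext_of_eq _ hslr (by rw [hM])
  refine ⟨by rw [hM]; exact hI.mwf, by rw [hM]; exact hI.mpos, by rw [hslr]; exact hI.nodup,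
    by rw [hM, hslr]; exact hI.top, by rw [hM, hslr]; exact hI.cur, fun i' => ?_, fun j =>
      WInv.ext he (fun h => h) (hwst j) (hI.wtr j)⟩
  by_cases hii : i' = i
  · subst hii; exact hri
  · exact RInv.ext he (fun h => h) (hrst i' hii) (hI.rdr i')

theorem inv_local_w {c c' : Config m n} (hI : Inv c) (j : Fin n)
    (hslr : c'.slr = c.slr) (hM : c'.M = c.M)
    (hrst : ∀ i, c'.rst i = c.rst i)
    (hwst : ∀ j', j' ≠ j → c'.wst j' = c.wst j')
    (hwj : WInv c' j) : Inv c' := by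
  have he : Ext c c' (fun _ => False) := ext_of_eq _ hslr (by rw [hM])
  refine ⟨by rw [hM]; exact hI.mwf, by rw [hM]; exact hI.mpos, by rw [hslr]; exact hI.nodup,
    by rw [hM, hslr]; exact hI.top, by rw [hM, hslr]; exact hI.cur,
    fun i => RInv.ext he (fun h => h) (hrst i) (hI.rdr i), fun j' => ?_⟩
  by_cases hjj : j' = j
  · subst hjj; exact hwj
  · exact WInv.ext he (fun h => h) (hwst j' hjj) (hI.wtr j')

theorem inv_local_a {c c' : Config m n} (hI : Inv c)
    (hslr : c'.slr = c.slr) (hM : c'.M = c.M)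
    (hrst : ∀ i, c'.rst i = c.rst i)
    (hwst : ∀ j, c'.wst j = c.wst j) : Inv c' := by
  have he : Ext c c' (fun _ => False) := ext_of_eq _ hslr (by rw [hM])
  exact ⟨by rw [hM]; exact hI.mwf, by rw [hM]; exact hI.mpos, by rw [hslr]; exact hI.nodup,
    by rw [hM, hslr]; exact hI.top, by rw [hM, hslr]; exact hI.cur,
    fun i => RInv.ext he (fun h => h) (hrst i) (hI.rdr i),
    fun j => WInv.ext he (fun h => h) (hwst j) (hI.wtr j)⟩

theorem stepFacts_mwrite {c c' : Config m n} (p : Proc m n) (v : MVal m)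
    (h1 : c.M.widx ≤ c'.M.widx) (hslr : c'.slr = c.slr)
    (h2 : c'.M.widx ≠ c.M.widx →
      hasW (c.slr c.M.widx) = true ∧ c'.M.widx = c.M.widx + 1) :
    StepFacts c c' (.mWrite p v) := by
  refine ⟨h1, fun hne => ⟨⟨p, v, rfl⟩, h2 hne⟩, fun x => by rw [hslr]; exact id,
    fun x hf ht => ?_, fun x hw => ?_⟩
  · rw [hslr, hf] at ht; exact absurd ht (by simp)
  · exact absurd hw (by simp [isWWrite])

theorem le_wmax_right {m : ℕ} (a b : MVal m) : b.widx ≤ (wmax a b).widx := by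
  unfold wmax; split <;> omega

theorem inv_step {c c' : Config m n} {l : Lbl m n} (hI : Inv c) (hs : Step c l c') :
    Inv c' ∧ StepFacts c c' l := by
  cases l with
  | invRead i =>
    simp only [Step] at hs
    obtain ⟨hpc, hc'⟩ := hs
    have R := hI.rdr i
    have hslr : c'.slr = c.slr := by rw [hc']; rfl
    have hM : c'.M = c.M := by rw [hc']; rfl
    have hro : ∀ i', i' ≠ i → c'.rst i' = c.rst i' := by
      intro i' hii; rw [hc']; exact Function.update_of_ne hii _ _
    have hws : ∀ j, c'.wst j = c.wst j := fun j => by rw [hc']; rfl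
    have hcr : c'.rst i = { c.rst i with it := 0, pc := if 0 ≤ (c.rst i).lsr then RPC.precheck else RPC.loopM } := by
      rw [hc']; simp [upR]
    refine ⟨inv_local_r hI i hslr hM hro hws ?_, stepFacts_of_eq hslr hM (by simp [isWWrite])⟩
    by_cases h0 : 0 ≤ (c.rst i).lsr
    · rw [if_pos h0] at hcr
      refine ⟨?_, ?_, ?_, ?_, ?_, ?_, ?_, ?_, ?_, ?_, ?_⟩ <;> rw [hcr]
      · exact R.mcwf
      · rw [hM]; exact R.lsrle
      · intro x hx; exact R.own x ((ownIn_congr hslr _ _).mp hx)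
      all_goals simp
    · rw [if_neg h0] at hcr
      refine ⟨?_, ?_, ?_, ?_, ?_, ?_, ?_, ?_, ?_, ?_, ?_⟩ <;> rw [hcr]
      · exact R.mcwf
      · rw [hM]; exact R.lsrle
      · intro x hx; exact R.own x ((ownIn_congr hslr _ _).mp hx)
      · simp
      · intro _ x hx
        have h1 := R.own x ((ownIn_congr hslr _ _).mp hx)
        have h2 := hI.mpos
        rw [hM]
        omega
      all_goals simp
  | respRead i v =>
    simp only [Step] at hs
    obtain ⟨hpc, hv, hc'⟩ := hs
    have R := hI.rdr i
    have hslr : c'.slr = c.slr := by rw [hc']; rfl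
    have hM : c'.M = c.M := by rw [hc']; rfl
    have hro : ∀ i', i' ≠ i → c'.rst i' = c.rst i' := by
      intro i' hii; rw [hc']; exact Function.update_of_ne hii _ _
    have hws : ∀ j, c'.wst j = c.wst j := fun j => by rw [hc']; rfl
    have hcr : c'.rst i = { c.rst i with pc := RPC.idle } := by rw [hc']; simp [upR]
    refine ⟨inv_local_r hI i hslr hM hro hws ?_, stepFacts_of_eq hslr hM (by simp [isWWrite])⟩
    refine ⟨?_, ?_, ?_, ?_, ?_, ?_, ?_, ?_, ?_, ?_, ?_⟩ <;> rw [hcr]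
    · exact R.mcwf
    · rw [hM]; exact R.lsrle
    · intro x hx; exact R.own x ((ownIn_congr hslr _ _).mp hx)
    all_goals simp
  | invWrite j v =>
    simp only [Step] at hs
    obtain ⟨hpc, hc'⟩ := hs
    have W := hI.wtr j
    have hslr : c'.slr = c.slr := by rw [hc']; rfl
    have hM : c'.M = c.M := by rw [hc']; rfl
    have hrs : ∀ i, c'.rst i = c.rst i := fun i => by rw [hc']; rfl
    have hwo : ∀ j', j' ≠ j → c'.wst j' = c.wst j' := by
      intro j' hjj; rw [hc']; exact Function.update_of_ne hjj _ _
    have hcw : c'.wst j = { c.wst j with v := v, pc := WPC.readM } := by rw [hc']; simp [upW]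
    refine ⟨inv_local_w hI j hslr hM hrs hwo ?_, stepFacts_of_eq hslr hM (by simp [isWWrite])⟩
    refine ⟨?_, ?_, ?_, ?_, ?_, ?_⟩ <;> rw [hcw]
    · exact W.mcwf
    · exact W.mc0
    · rw [hM]; exact W.mcle
    · intro _ x hx
      rw [hM]
      exact W.ownA (Or.inl hpc) x ((ownIn_congr hslr _ _).mp hx)
    all_goals simp
  | respWrite j =>
    simp only [Step] at hs
    obtain ⟨hpc, hc'⟩ := hs
    have W := hI.wtr j
    have hslr : c'.slr = c.slr := by rw [hc']; rfl
    have hM : c'.M = c.M := by rw [hc']; rfl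
    have hrs : ∀ i, c'.rst i = c.rst i := fun i => by rw [hc']; rfl
    have hwo : ∀ j', j' ≠ j → c'.wst j' = c.wst j' := by
      intro j' hjj; rw [hc']; exact Function.update_of_ne hjj _ _
    have hcw : c'.wst j = { c.wst j with pc := WPC.idle } := by rw [hc']; simp [upW]
    refine ⟨inv_local_w hI j hslr hM hrs hwo ?_, stepFacts_of_eq hslr hM (by simp [isWWrite])⟩
    refine ⟨?_, ?_, ?_, ?_, ?_, ?_⟩ <;> rw [hcw]
    · exact W.mcwf
    · exact W.mc0
    · rw [hM]; exact W.mcle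
    · intro _ x hx
      rw [hM]
      exact W.ownA (Or.inr (Or.inr hpc)) x ((ownIn_congr hslr _ _).mp hx)
    all_goals simp
  | invAudit a =>
    simp only [Step] at hs
    obtain ⟨hpc, hc'⟩ := hs
    have hslr : c'.slr = c.slr := by rw [hc']; rfl
    have hM : c'.M = c.M := by rw [hc']; rfl
    exact ⟨inv_local_a hI hslr hM (fun i => by rw [hc']; rfl) (fun j => by rw [hc']; rfl),
      stepFacts_of_eq hslr hM (by simp [isWWrite])⟩
  | respAudit a A =>
    simp only [Step] at hs
    obtain ⟨hpc, hA, hc'⟩ := hs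
    have hslr : c'.slr = c.slr := by rw [hc']; rfl
    have hM : c'.M = c.M := by rw [hc']; rfl
    exact ⟨inv_local_a hI hslr hM (fun i => by rw [hc']; rfl) (fun j => by rw [hc']; rfl),
      stepFacts_of_eq hslr hM (by simp [isWWrite])⟩
  | hRead j k a =>
    simp only [Step] at hs
    obtain ⟨hpc, hk, ha, hc'⟩ := hs
    have W := hI.wtr j
    have hslr : c'.slr = c.slr := by rw [hc']; rfl
    have hM : c'.M = c.M := by rw [hc']; rfl
    have hrs : ∀ i, c'.rst i = c.rst i := fun i => by rw [hc']; rfl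
    have hwo : ∀ j', j' ≠ j → c'.wst j' = c.wst j' := by
      intro j' hjj; rw [hc']; exact Function.update_of_ne hjj _ _
    refine ⟨inv_local_w hI j hslr hM hrs hwo ?_, stepFacts_of_eq hslr hM (by simp [isWWrite])⟩
    by_cases hlt : (c.wst j).mc.ridx k < a
    · have hcw : c'.wst j = { c.wst j with a := a, pc := WPC.scanS } := by
        rw [hc']; rw [if_pos hlt]; simp [upW]
      refine ⟨?_, ?_, ?_, ?_, ?_, ?_⟩ <;> rw [hcw]
      · exact W.mcwf
      · exact W.mc0
      · rw [hM]; exact W.mcle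
      · simp
      · intro _ x hx
        exact W.ownB (Or.inl hpc) x ((ownIn_congr hslr _ _).mp hx)
      · simp
    · have hcw : c'.wst j = { c.wst j with k := (c.wst j).k + 1 } := by
        rw [hc']; rw [if_neg hlt]; simp [upW]
      refine ⟨?_, ?_, ?_, ?_, ?_, ?_⟩ <;> rw [hcw]
      · exact W.mcwf
      · exact W.mc0
      · rw [hM]; exact W.mcle
      · intro hp x hx
        rw [hM]
        refine W.ownA ?_ x ((ownIn_congr hslr _ _).mp hx)
        simpa using hp
      · intro hp x hx
        refine W.ownB ?_ x ((ownIn_congr hslr _ _).mp hx)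
        simpa using hp
      · intro hp
        have h1 := W.ownC (by simpa using hp)
        exact ⟨fun x hx => h1.1 x ((ownIn_congr hslr _ _).mp hx), by rw [hslr]; exact h1.2⟩
  | hWrite i x =>
    simp only [Step] at hs
    obtain ⟨hpc, hx, hc'⟩ := hs
    have R := hI.rdr i
    have hslr : c'.slr = c.slr := by rw [hc']; rfl
    have hM : c'.M = c.M := by rw [hc']; rfl
    have hro : ∀ i', i' ≠ i → c'.rst i' = c.rst i' := by
      intro i' hii; rw [hc']; exact Function.update_of_ne hii _ _
    have hws : ∀ j, c'.wst j = c.wst j := fun j => by rw [hc']; rfl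
    have hcr : c'.rst i = { c.rst i with pc := RPC.wSLR } := by rw [hc']; simp [upR]
    refine ⟨inv_local_r hI i hslr hM hro hws ?_, stepFacts_of_eq hslr hM (by simp [isWWrite])⟩
    refine ⟨?_, ?_, ?_, ?_, ?_, ?_, ?_, ?_, ?_, ?_, ?_⟩ <;> rw [hcr]
    · exact R.mcwf
    · rw [hM]; exact R.lsrle
    · intro x' hx'; exact R.own x' ((ownIn_congr hslr _ _).mp hx')
    · intro _ x' hx'; exact R.ownlt (Or.inl hpc) x' ((ownIn_congr hslr _ _).mp hx')
    · simp
    · intro _; exact R.mceq (Or.inr (Or.inl hpc))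
    all_goals simp
  | tau p =>
    cases p with
    | rdr i =>
      simp only [Step] at hs
      have R := hI.rdr i
      rcases hs with ⟨hpc, hw, hc'⟩ | ⟨hpc, hc'⟩
      · -- helpChk with no w-tuple in win
        have hslr : c'.slr = c.slr := by rw [hc']; rfl
        have hM : c'.M = c.M := by rw [hc']; rfl
        have hro : ∀ i', i' ≠ i → c'.rst i' = c.rst i' := by
          intro i' hii; rw [hc']; exact Function.update_of_ne hii _ _
        have hws : ∀ j, c'.wst j = c.wst j := fun j => by rw [hc']; rfl
        have hcr : c'.rst i = { c.rst i with pc := RPC.loopEnd } := by rw [hc']; simp [upR]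
        refine ⟨inv_local_r hI i hslr hM hro hws ?_, stepFacts_of_eq hslr hM (by simp [isWWrite])⟩
        refine ⟨?_, ?_, ?_, ?_, ?_, ?_, ?_, ?_, ?_, ?_, ?_⟩ <;> rw [hcr]
        · exact R.mcwf
        · rw [hM]; exact R.lsrle
        · intro x hx; exact R.own x ((ownIn_congr hslr _ _).mp hx)
        · simp
        · simp
        · simp
        · intro _; exact R.memwin (Or.inr (Or.inl hpc))
        · simp
        · simp
        · simp
        · intro _ hw2
          simp only at hw2
          rw [hw] at hw2
          exact absurd hw2 (by simp)
      · -- loopEnd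
        have hslr : c'.slr = c.slr := by rw [hc']; rfl
        have hM : c'.M = c.M := by rw [hc']; rfl
        have hro : ∀ i', i' ≠ i → c'.rst i' = c.rst i' := by
          intro i' hii; rw [hc']; exact Function.update_of_ne hii _ _
        have hws : ∀ j, c'.wst j = c.wst j := fun j => by rw [hc']; rfl
        refine ⟨inv_local_r hI i hslr hM hro hws ?_, stepFacts_of_eq hslr hM (by simp [isWWrite])⟩
        by_cases hmem : i ∈ readersOf (c.rst i).win
        · have hcr : c'.rst i = { c.rst i with pc := RPC.retNow } := by
            rw [hc']; rw [if_pos hmem]; simp [upR]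
          refine ⟨?_, ?_, ?_, ?_, ?_, ?_, ?_, ?_, ?_, ?_, ?_⟩ <;> rw [hcr]
          · exact R.mcwf
          · rw [hM]; exact R.lsrle
          · intro x hx; exact R.own x ((ownIn_congr hslr _ _).mp hx)
          all_goals simp
        · have hcr : c'.rst i = { c.rst i with pc := RPC.loopM } := by
            rw [hc']; rw [if_neg hmem]; simp [upR]
          refine ⟨?_, ?_, ?_, ?_, ?_, ?_, ?_, ?_, ?_, ?_, ?_⟩ <;> rw [hcr]
          · exact R.mcwf
          · rw [hM]; exact R.lsrle
          · intro x hx; exact R.own x ((ownIn_congr hslr _ _).mp hx)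
          · simp
          · intro _ x hx
            have hmw : Entry.r i ∈ (c.rst i).win := R.memwin (Or.inr (Or.inr hpc))
            have hww : hasW (c.rst i).win = true := hasW_of_mem_not_readers hmw hmem
            have h1 := R.lend hpc hww
            have h2 := R.own x ((ownIn_congr hslr _ _).mp hx)
            rw [hM]
            omega
          all_goals simp
    | wtr j =>
      simp only [Step] at hs
      obtain ⟨hpc, hk, hc'⟩ := hs
      have W := hI.wtr j
      have hslr : c'.slr = c.slr := by rw [hc']; rfl
      have hM : c'.M = c.M := by rw [hc']; rfl
      have hrs : ∀ i, c'.rst i = c.rst i := fun i => by rw [hc']; rfl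
      have hwo : ∀ j', j' ≠ j → c'.wst j' = c.wst j' := by
        intro j' hjj; rw [hc']; exact Function.update_of_ne hjj _ _
      have hcw : c'.wst j = { c.wst j with pc := WPC.post } := by rw [hc']; simp [upW]
      refine ⟨inv_local_w hI j hslr hM hrs hwo ?_, stepFacts_of_eq hslr hM (by simp [isWWrite])⟩
      refine ⟨?_, ?_, ?_, ?_, ?_, ?_⟩ <;> rw [hcw]
      · exact W.mcwf
      · exact W.mc0
      · rw [hM]; exact W.mcle
      · simp
      · intro _ x hx
        exact W.ownB (Or.inl hpc) x ((ownIn_congr hslr _ _).mp hx)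
      · simp
    | adt a => simp only [Step] at hs
  | slrRead p x win =>
    simp only [Step] at hs
    obtain ⟨hwin, hs⟩ := hs
    cases p with
    | rdr i =>
      have R := hI.rdr i
      rcases hs with ⟨hpc, hx, hc'⟩ | ⟨hpc, hx, hc'⟩ | ⟨hpc, hx, hc'⟩ | ⟨hpc, hx, hc'⟩ <;>
        (have hslr : c'.slr = c.slr := by rw [hc']; rfl) <;>
        (have hM : c'.M = c.M := by rw [hc']; rfl) <;>
        (have hro : ∀ i', i' ≠ i → c'.rst i' = c.rst i' := by
          intro i' hii; rw [hc']; exact Function.update_of_ne hii _ _) <;>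
        (have hws : ∀ j, c'.wst j = c.wst j := fun j => by rw [hc']; rfl) <;>
        refine ⟨inv_local_r hI i hslr hM hro hws ?_, stepFacts_of_eq hslr hM (by simp [isWWrite])⟩
      · -- precheck
        by_cases hw : hasW win = true
        · have hcr : c'.rst i = { c.rst i with win := win, pc := RPC.preM } := by
            rw [hc']; rw [if_pos hw]; simp [upR]
          refine ⟨?_, ?_, ?_, ?_, ?_, ?_, ?_, ?_, ?_, ?_, ?_⟩ <;> rw [hcr]
          · exact R.mcwf
          · rw [hM]; exact R.lsrle
          · intro x' hx'; exact R.own x' ((ownIn_congr hslr _ _).mp hx')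
          · simp
          · simp
          · simp
          · simp
          · simp
          · intro _
            rw [hslr]
            simp only
            rw [← hx, ← hwin]
            exact hw
          · simp
          · simp
        · have hcr : c'.rst i = { c.rst i with win := win, pc := RPC.retNow } := by
            rw [hc']; rw [if_neg hw]; simp [upR]
          refine ⟨?_, ?_, ?_, ?_, ?_, ?_, ?_, ?_, ?_, ?_, ?_⟩ <;> rw [hcr]
          · exact R.mcwf
          · rw [hM]; exact R.lsrle
          · intro x' hx'; exact R.own x' ((ownIn_congr hslr _ _).mp hx')
          all_goals simp
      · -- helpVal
        have hcr : c'.rst i = { c.rst i with lval := wval win, pc := RPC.retNow } := by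
          rw [hc']; simp [upR]
        refine ⟨?_, ?_, ?_, ?_, ?_, ?_, ?_, ?_, ?_, ?_, ?_⟩ <;> rw [hcr]
        · exact R.mcwf
        · rw [hM]; exact R.lsrle
        · intro x' hx'; exact R.own x' ((ownIn_congr hslr _ _).mp hx')
        all_goals simp
      · -- rSLR
        have hcr : c'.rst i = { c.rst i with win := win, pc := RPC.gVal } := by
          rw [hc']; simp [upR]
        refine ⟨?_, ?_, ?_, ?_, ?_, ?_, ?_, ?_, ?_, ?_, ?_⟩ <;> rw [hcr]
        · exact R.mcwf
        · rw [hM]; exact R.lsrle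
        · intro x' hx'; exact R.own x' ((ownIn_congr hslr _ _).mp hx')
        · simp
        · simp
        · intro _; exact R.mceq (Or.inr (Or.inr (Or.inr (Or.inl hpc))))
        · intro _
          simp only
          rw [hwin, hx]
          exact R.memslr hpc
        · simp
        · simp
        · intro _ hww
          simp only at hww ⊢
          rw [hslr, ← hx, ← hwin]
          exact hww
        · simp
      · -- gVal
        have hcr : c'.rst i = { c.rst i with lval := wval win, pc := RPC.helpChk } := by
          rw [hc']; simp [upR]
        refine ⟨?_, ?_, ?_, ?_, ?_, ?_, ?_, ?_, ?_, ?_, ?_⟩ <;> rw [hcr]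
        · exact R.mcwf
        · rw [hM]; exact R.lsrle
        · intro x' hx'; exact R.own x' ((ownIn_congr hslr _ _).mp hx')
        · simp
        · simp
        · intro _; exact R.mceq (Or.inr (Or.inr (Or.inr (Or.inr (Or.inl hpc)))))
        · intro _; exact R.memwin (Or.inl hpc)
        · simp
        · simp
        · intro _ hww
          rw [hslr]
          exact R.hwin (Or.inl hpc) hww
        · simp
    | wtr j =>
      have W := hI.wtr j
      rcases hs with ⟨hpc, hx, hk, hc'⟩ | ⟨hpc, hx, hc'⟩ | ⟨hpc, hx, hc'⟩ <;>
        (have hslr : c'.slr = c.slr := by rw [hc']; rfl) <;>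
        (have hM : c'.M = c.M := by rw [hc']; rfl) <;>
        (have hrs : ∀ i, c'.rst i = c.rst i := fun i => by rw [hc']; rfl) <;>
        (have hwo : ∀ j', j' ≠ j → c'.wst j' = c.wst j' := by
          intro j' hjj; rw [hc']; exact Function.update_of_ne hjj _ _) <;>
        refine ⟨inv_local_w hI j hslr hM hrs hwo ?_, stepFacts_of_eq hslr hM (by simp [isWWrite])⟩
      · -- scanS
        have hcw : c'.wst j = { c.wst j with toHelp := if (⟨(c.wst j).k, hk⟩ : Fin m) ∈ readersOf win then (c.wst j).toHelp else insert (⟨(c.wst j).k, hk⟩ : Fin m) (c.wst j).toHelp, k := (c.wst j).k + 1, pc := WPC.scanH } := by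
          rw [hc']; simp [upW]
        refine ⟨?_, ?_, ?_, ?_, ?_, ?_⟩ <;> rw [hcw]
        · exact W.mcwf
        · exact W.mc0
        · rw [hM]; exact W.mcle
        · simp
        · intro _ x' hx'
          exact W.ownB (Or.inr (Or.inl hpc)) x' ((ownIn_congr hslr _ _).mp hx')
        · simp
      · -- postR
        have hcw : c'.wst j = { c.wst j with win := win, pc := WPC.postV } := by
          rw [hc']; simp [upW]
        refine ⟨?_, ?_, ?_, ?_, ?_, ?_⟩ <;> rw [hcw]
        · exact W.mcwf
        · exact W.mc0
        · rw [hM]; exact W.mcle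
        · simp
        · simp
        · intro _
          have h1 := W.ownC (Or.inl hpc)
          exact ⟨fun x' hx' => h1.1 x' ((ownIn_congr hslr _ _).mp hx'), by rw [hslr]; exact h1.2⟩
      · -- postV
        have hcw : c'.wst j = { c.wst j with val := wval win, pc := WPC.postM } := by
          rw [hc']; simp [upW]
        refine ⟨?_, ?_, ?_, ?_, ?_, ?_⟩ <;> rw [hcw]
        · exact W.mcwf
        · exact W.mc0
        · rw [hM]; exact W.mcle
        · simp
        · simp
        · intro _
          have h1 := W.ownC (Or.inr (Or.inl hpc))
          exact ⟨fun x' hx' => h1.1 x' ((ownIn_congr hslr _ _).mp hx'), by rw [hslr]; exact h1.2⟩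
    | adt a =>
      rcases hs with ⟨hpc, hx, hc'⟩ | ⟨hpc, hx, hc'⟩ <;>
        (have hslr : c'.slr = c.slr := by rw [hc']; rfl) <;>
        (have hM : c'.M = c.M := by rw [hc']; rfl) <;>
        exact ⟨inv_local_a hI hslr hM (fun i => by rw [hc']; rfl) (fun j => by rw [hc']; rfl),
          stepFacts_of_eq hslr hM (by simp [isWWrite])⟩
  | mRead p v =>
    simp only [Step] at hs
    obtain ⟨hv, hs⟩ := hs
    subst hv
    cases p with
    | rdr i =>
      have R := hI.rdr i
      rcases hs with ⟨hpc, hc'⟩ | ⟨hpc, hc'⟩ <;>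
        (have hslr : c'.slr = c.slr := by rw [hc']; rfl) <;>
        (have hM : c'.M = c.M := by rw [hc']; rfl) <;>
        (have hro : ∀ i', i' ≠ i → c'.rst i' = c.rst i' := by
          intro i' hii; rw [hc']; exact Function.update_of_ne hii _ _) <;>
        (have hws : ∀ j, c'.wst j = c.wst j := fun j => by rw [hc']; rfl) <;>
        refine ⟨inv_local_r hI i hslr hM hro hws ?_, stepFacts_of_eq hslr hM (by simp [isWWrite])⟩
      · -- preM
        by_cases heq : c.M.widx = (c.rst i).lsr
        · have hcr : c'.rst i = { c.rst i with mc := c.M, pc := RPC.preHelp } := by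
            rw [hc']; rw [if_pos heq]; simp [upR]
          refine ⟨?_, ?_, ?_, ?_, ?_, ?_, ?_, ?_, ?_, ?_, ?_⟩ <;> rw [hcr]
          · exact hI.mwf
          · rw [hM]; exact R.lsrle
          · intro x hx; exact R.own x ((ownIn_congr hslr _ _).mp hx)
          · simp
          · simp
          · intro _; exact heq
          · simp
          · simp
          · intro _
            rw [hslr]
            exact R.htop (Or.inl hpc)
          · simp
          · simp
        · have hcr : c'.rst i = { c.rst i with mc := c.M, pc := RPC.loopM } := by
            rw [hc']; rw [if_neg heq]; simp [upR]
          refine ⟨?_, ?_, ?_, ?_, ?_, ?_, ?_, ?_, ?_, ?_, ?_⟩ <;> rw [hcr]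
          · exact hI.mwf
          · rw [hM]; exact R.lsrle
          · intro x hx; exact R.own x ((ownIn_congr hslr _ _).mp hx)
          · simp
          · intro _ x hx
            have h1 := R.own x ((ownIn_congr hslr _ _).mp hx)
            have h2 := R.lsrle
            rw [hM]
            omega
          all_goals simp
      · -- loopM
        by_cases hlt : (c.rst i).lsr < c.M.ridx i
        · have hcr : c'.rst i = { c.rst i with mc := c.M, it := (c.rst i).it + 1, lsr := c.M.ridx i, pc := RPC.helpVal } := by
            rw [hc']; rw [if_pos hlt]; simp [upR]
          refine ⟨?_, ?_, ?_, ?_, ?_, ?_, ?_, ?_, ?_, ?_, ?_⟩ <;> rw [hcr]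
          · exact hI.mwf
          · rw [hM]
            exact le_of_lt (hI.mwf i)
          · intro x hx
            have h1 := R.own x ((ownIn_congr hslr _ _).mp hx)
            simp only at h1 ⊢
            omega
          all_goals simp
        · have hcr : c'.rst i = { c.rst i with mc := c.M, it := (c.rst i).it + 1, lsr := c.M.widx, pc := RPC.annH } := by
            rw [hc']; rw [if_neg hlt]; simp [upR]
          refine ⟨?_, ?_, ?_, ?_, ?_, ?_, ?_, ?_, ?_, ?_, ?_⟩ <;> rw [hcr]
          · exact hI.mwf
          · rw [hM]
          · intro x hx
            exact le_of_lt (R.ownlm hpc x ((ownIn_congr hslr _ _).mp hx))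
          · intro _ x hx
            exact R.ownlm hpc x ((ownIn_congr hslr _ _).mp hx)
          · simp
          · intro _; rfl
          all_goals simp
    | wtr j =>
      have W := hI.wtr j
      obtain ⟨hpc, hc'⟩ := hs
      have hslr : c'.slr = c.slr := by rw [hc']; rfl
      have hM : c'.M = c.M := by rw [hc']; rfl
      have hrs : ∀ i, c'.rst i = c.rst i := fun i => by rw [hc']; rfl
      have hwo : ∀ j', j' ≠ j → c'.wst j' = c.wst j' := by
        intro j' hjj; rw [hc']; exact Function.update_of_ne hjj _ _
      have hcw : c'.wst j = { c.wst j with mc := c.M, toHelp := ∅, k := 0, pc := WPC.scanH } := by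
        rw [hc']; simp [upW]
      refine ⟨inv_local_w hI j hslr hM hrs hwo ?_, stepFacts_of_eq hslr hM (by simp [isWWrite])⟩
      refine ⟨?_, ?_, ?_, ?_, ?_, ?_⟩ <;> rw [hcw]
      · exact hI.mwf
      · exact hI.mpos
      · rw [hM]
      · simp
      · intro _ x hx
        exact W.ownA (Or.inr (Or.inl hpc)) x ((ownIn_congr hslr _ _).mp hx)
      · simp
    | adt a =>
      obtain ⟨hpc, hc'⟩ := hs
      have hslr : c'.slr = c.slr := by rw [hc']; rfl
      have hM : c'.M = c.M := by rw [hc']; rfl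
      exact ⟨inv_local_a hI hslr hM (fun i => by rw [hc']; rfl) (fun j => by rw [hc']; rfl),
        stepFacts_of_eq hslr hM (by simp [isWWrite])⟩
  | mWrite p v =>
    simp only [Step] at hs
    cases p with
    | rdr i =>
      have R := hI.rdr i
      rcases hs with ⟨hpc, hveq, hc'⟩ | ⟨hpc, hhw0, hveq, hc'⟩
      · -- preHelp
        subst hveq
        have hwf : ∀ k, (c.rst i).mc.ridx k ≤ (c.rst i).lsr := by
          intro k
          have h1 := R.mcwf k
          have h2 := R.mceq (Or.inl hpc)
          omega
        have hhw : hasW (c.slr (c.rst i).lsr) = true := R.htop (Or.inr hpc)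
        have WF := wmax_mArg_facts hI (c.rst i).mc (c.rst i).win (c.rst i).lsr (c.rst i).lval hwf hhw
        have hslr : c'.slr = c.slr := by rw [hc']; rfl
        have hM : c'.M = wmax c.M (mArg (c.rst i).mc (c.rst i).win (c.rst i).lsr (c.rst i).lval) := by
          rw [hc']
        have hMle : c.M.widx ≤ c'.M.widx := by rw [hM]; exact WF.2.2.1
        have hext : Ext c c' (fun _ => False) := ext_of_eq _ hslr hMle
        have hro : ∀ i', i' ≠ i → c'.rst i' = c.rst i' := by
          intro i' hii; rw [hc']; exact Function.update_of_ne hii _ _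
        have hws : ∀ j, c'.wst j = c.wst j := fun j => by rw [hc']; rfl
        have hcr : c'.rst i = { c.rst i with pc := RPC.loopM } := by rw [hc']; simp [upR]
        constructor
        · refine ⟨by rw [hM]; exact WF.1, by rw [hM]; exact WF.2.1, by rw [hslr]; exact hI.nodup,
            by rw [hM, hslr]; exact WF.2.2.2.1, by rw [hM, hslr]; exact WF.2.2.2.2.1,
            fun i' => ?_, fun j => WInv.ext hext (fun h => h) (hws j) (hI.wtr j)⟩
          by_cases hii : i' = i
          · subst hii
            refine ⟨?_, ?_, ?_, ?_, ?_, ?_, ?_, ?_, ?_, ?_, ?_⟩ <;> rw [hcr]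
            · exact R.mcwf
            · rw [hM]; exact R.lsrle.trans WF.2.2.1
            · intro x hx; exact R.own x ((ownIn_congr hslr _ _).mp hx)
            · simp
            · intro _ x hx
              have h1 := R.own x ((ownIn_congr hslr _ _).mp hx)
              have h2 := le_wmax_right c.M (mArg (c.rst i').mc (c.rst i').win (c.rst i').lsr (c.rst i').lval)
              have h3 : (mArg (c.rst i').mc (c.rst i').win (c.rst i').lsr (c.rst i').lval).widx = (c.rst i').lsr + 1 := rfl
              rw [hM]
              omega
            all_goals simp
          · exact RInv.ext hext (fun h => h) (hro i' hii) (hI.rdr i')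
        · exact stepFacts_mwrite _ _ hMle hslr (by rw [hM]; exact WF.2.2.2.2.2)
      · -- helpChk
        subst hveq
        have hwf : ∀ k, (c.rst i).mc.ridx k ≤ (c.rst i).lsr := by
          intro k
          have h1 := R.mcwf k
          have h2 := R.mceq (Or.inr (Or.inr (Or.inr (Or.inr (Or.inr hpc)))))
          omega
        have hhw : hasW (c.slr (c.rst i).lsr) = true := R.hwin (Or.inr hpc) hhw0
        have WF := wmax_mArg_facts hI (c.rst i).mc (c.rst i).win (c.rst i).lsr (c.rst i).lval hwf hhw
        have hslr : c'.slr = c.slr := by rw [hc']; rfl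
        have hM : c'.M = wmax c.M (mArg (c.rst i).mc (c.rst i).win (c.rst i).lsr (c.rst i).lval) := by
          rw [hc']
        have hMle : c.M.widx ≤ c'.M.widx := by rw [hM]; exact WF.2.2.1
        have hext : Ext c c' (fun _ => False) := ext_of_eq _ hslr hMle
        have hro : ∀ i', i' ≠ i → c'.rst i' = c.rst i' := by
          intro i' hii; rw [hc']; exact Function.update_of_ne hii _ _
        have hws : ∀ j, c'.wst j = c.wst j := fun j => by rw [hc']; rfl
        have hcr : c'.rst i = { c.rst i with pc := RPC.loopEnd } := by rw [hc']; simp [upR]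
        constructor
        · refine ⟨by rw [hM]; exact WF.1, by rw [hM]; exact WF.2.1, by rw [hslr]; exact hI.nodup,
            by rw [hM, hslr]; exact WF.2.2.2.1, by rw [hM, hslr]; exact WF.2.2.2.2.1,
            fun i' => ?_, fun j => WInv.ext hext (fun h => h) (hws j) (hI.wtr j)⟩
          by_cases hii : i' = i
          · subst hii
            refine ⟨?_, ?_, ?_, ?_, ?_, ?_, ?_, ?_, ?_, ?_, ?_⟩ <;> rw [hcr]
            · exact R.mcwf
            · rw [hM]; exact R.lsrle.trans WF.2.2.1
            · intro x hx; exact R.own x ((ownIn_congr hslr _ _).mp hx)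
            · simp
            · simp
            · simp
            · intro _; exact R.memwin (Or.inr (Or.inl hpc))
            · simp
            · simp
            · simp
            · intro _ _
              have h2 := le_wmax_right c.M (mArg (c.rst i').mc (c.rst i').win (c.rst i').lsr (c.rst i').lval)
              have h3 : (mArg (c.rst i').mc (c.rst i').win (c.rst i').lsr (c.rst i').lval).widx = (c.rst i').lsr + 1 := rfl
              rw [hM]
              simp only
              omega
          · exact RInv.ext hext (fun h => h) (hro i' hii) (hI.rdr i')
        · exact stepFacts_mwrite _ _ hMle hslr (by rw [hM]; exact WF.2.2.2.2.2)
    | wtr j =>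
      have W := hI.wtr j
      obtain ⟨hpc, hveq, hc'⟩ := hs
      subst hveq
      have hwf : ∀ k, (c.wst j).mc.ridx k ≤ (c.wst j).mc.widx := fun k => le_of_lt (W.mcwf k)
      have hhw : hasW (c.slr (c.wst j).mc.widx) = true := (W.ownC (Or.inr (Or.inr hpc))).2
      have WF := wmax_mArg_facts hI (c.wst j).mc (c.wst j).win (c.wst j).mc.widx (c.wst j).val hwf hhw
      have hslr : c'.slr = c.slr := by rw [hc']; rfl
      have hM : c'.M = wmax c.M (mArg (c.wst j).mc (c.wst j).win (c.wst j).mc.widx (c.wst j).val) := by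
        rw [hc']
      have hMle : c.M.widx ≤ c'.M.widx := by rw [hM]; exact WF.2.2.1
      have hext : Ext c c' (fun _ => False) := ext_of_eq _ hslr hMle
      have hrs : ∀ i, c'.rst i = c.rst i := fun i => by rw [hc']; rfl
      have hwo : ∀ j', j' ≠ j → c'.wst j' = c.wst j' := by
        intro j' hjj; rw [hc']; exact Function.update_of_ne hjj _ _
      have hcw : c'.wst j = { c.wst j with pc := WPC.wret } := by rw [hc']; simp [upW]
      constructor
      · refine ⟨by rw [hM]; exact WF.1, by rw [hM]; exact WF.2.1, by rw [hslr]; exact hI.nodup,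
          by rw [hM, hslr]; exact WF.2.2.2.1, by rw [hM, hslr]; exact WF.2.2.2.2.1,
          fun i => RInv.ext hext (fun h => h) (hrs i) (hI.rdr i), fun j' => ?_⟩
        by_cases hjj : j' = j
        · subst hjj
          refine ⟨?_, ?_, ?_, ?_, ?_, ?_⟩ <;> rw [hcw]
          · exact W.mcwf
          · exact W.mc0
          · rw [hM]; exact W.mcle.trans WF.2.2.1
          · intro _ x hx
            have h1 := (W.ownC (Or.inr (Or.inr hpc))).1 x ((ownIn_congr hslr _ _).mp hx)
            have h2 := le_wmax_right c.M (mArg (c.wst j').mc (c.wst j').win (c.wst j').mc.widx (c.wst j').val)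
            have h3 : (mArg (c.wst j').mc (c.wst j').win (c.wst j').mc.widx (c.wst j').val).widx = (c.wst j').mc.widx + 1 := rfl
            rw [hM]
            omega
          · simp
          · simp
        · exact WInv.ext hext (fun h => h) (hwo j' hjj) (hI.wtr j')
      · exact stepFacts_mwrite _ _ hMle hslr (by rw [hM]; exact WF.2.2.2.2.2)
    | adt a => exact hs.elim
  | slrWrite p x e =>
    simp only [Step] at hs
    cases p with
    | rdr i =>
      obtain ⟨hpc, hx, he, hc'⟩ := hs
      subst hx
      subst he
      have R := hI.rdr i
      have hfresh : ¬ ownIn c (Sum.inl i) (c.rst i).lsr := fun h =>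
        absurd (R.ownlt (Or.inr hpc) _ h) (lt_irrefl _)
      have happ : slide (m + n) (c.slr (c.rst i).lsr) (Entry.r i) = c.slr (c.rst i).lsr ++ [Entry.r i] :=
        slide_eq_append _ _ (length_lt_of_fresh (hI.nodup _) (Entry.r i) hfresh)
      have hM : c'.M = c.M := by rw [hc']; rfl
      have hsl' : c'.slr = Function.update c.slr (c.rst i).lsr (c.slr (c.rst i).lsr ++ [Entry.r i]) := by
        rw [hc', happ]
      have hMle : c.M.widx ≤ c'.M.widx := by rw [hM]
      have hext : Ext c c' (· = owner (Entry.r i)) := ext_update hMle hsl'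
      have hro : ∀ i', i' ≠ i → c'.rst i' = c.rst i' := by
        intro i' hii; rw [hc']; exact Function.update_of_ne hii _ _
      have hws : ∀ j, c'.wst j = c.wst j := fun j => by rw [hc']; rfl
      have hcr : c'.rst i = { c.rst i with pc := RPC.rSLR } := by rw [hc']; simp [upR]
      constructor
      · refine ⟨by rw [hM]; exact hI.mwf, by rw [hM]; exact hI.mpos, ?_, ?_, ?_, fun i' => ?_,
          fun j => WInv.ext hext (by simp [owner]) (hws j) (hI.wtr j)⟩
        · intro y
          by_cases hy : y = (c.rst i).lsr
          · subst hy
            rw [hsl', Function.update_self, List.map_append]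
            exact nodup_concat (hI.nodup _) hfresh
          · rw [hsl', Function.update_of_ne hy]; exact hI.nodup y
        · intro y hy2
          rw [hM] at hy2
          by_cases hy : y = (c.rst i).lsr
          · subst hy
            rw [hsl', Function.update_self, hasW_append, hI.top _ hy2]
            rfl
          · rw [hsl', Function.update_of_ne hy]; exact hI.top y hy2
        · rw [hM]; exact hext.hasW hI.cur
        · by_cases hii : i' = i
          · subst hii
            refine ⟨?_, ?_, ?_, ?_, ?_, ?_, ?_, ?_, ?_, ?_, ?_⟩ <;> rw [hcr]
            · exact R.mcwf
            · rw [hM]; exact R.lsrle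
            · intro x hx
              rcases (ownIn_update hsl' _ _).mp hx with h | ⟨h1, h2⟩
              · exact le_of_lt (R.ownlt (Or.inr hpc) x h)
              · simp only at h1 ⊢
                omega
            · simp
            · simp
            · intro _; exact R.mceq (Or.inr (Or.inr (Or.inl hpc)))
            · simp
            · intro _
              rw [hsl', Function.update_self]
              exact List.mem_append_right _ (List.mem_singleton_self _)
            all_goals simp
          · refine RInv.ext hext ?_ (hro i' hii) (hI.rdr i')
            simp only [owner, Sum.inl.injEq]
            exact fun h => hii h
      · refine ⟨hMle, fun h => absurd hM.symm (by rw [hM] at h; exact fun _ => h rfl), fun y => hext.hasW, fun y hf ht => ?_, fun y hw => ?_⟩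
        · exfalso
          by_cases hy : y = (c.rst i).lsr
          · subst hy
            rw [hsl', Function.update_self, hasW_append, hf] at ht
            exact absurd ht (by simp [Entry.isW])
          · rw [hsl', Function.update_of_ne hy, hf] at ht
            exact absurd ht (by simp)
        · obtain ⟨p, jj, vv, hh, heq⟩ := hw
          exact absurd heq (by simp)
    | wtr j =>
      obtain ⟨hpc, hx, he, hc'⟩ := hs
      subst hx
      subst he
      have W := hI.wtr j
      have hfresh : ¬ ownIn c (Sum.inr j) (c.wst j).mc.widx := fun h =>
        absurd (W.ownB (Or.inr (Or.inr hpc)) _ h) (lt_irrefl _)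
      have happ : slide (m + n) (c.slr (c.wst j).mc.widx) (Entry.w j (c.wst j).v (c.wst j).toHelp) = c.slr (c.wst j).mc.widx ++ [Entry.w j (c.wst j).v (c.wst j).toHelp] :=
        slide_eq_append _ _ (length_lt_of_fresh (hI.nodup _) (Entry.w j (c.wst j).v (c.wst j).toHelp) hfresh)
      have hM : c'.M = c.M := by rw [hc']; rfl
      have hsl' : c'.slr = Function.update c.slr (c.wst j).mc.widx (c.slr (c.wst j).mc.widx ++ [Entry.w j (c.wst j).v (c.wst j).toHelp]) := by
        rw [hc', happ]
      have hMle : c.M.widx ≤ c'.M.widx := by rw [hM]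
      have hext : Ext c c' (· = owner (Entry.w j (c.wst j).v (c.wst j).toHelp)) := ext_update hMle hsl'
      have hrs : ∀ i, c'.rst i = c.rst i := fun i => by rw [hc']; rfl
      have hwo : ∀ j', j' ≠ j → c'.wst j' = c.wst j' := by
        intro j' hjj; rw [hc']; exact Function.update_of_ne hjj _ _
      have hcw : c'.wst j = { c.wst j with pc := WPC.postR } := by rw [hc']; simp [upW]
      constructor
      · refine ⟨by rw [hM]; exact hI.mwf, by rw [hM]; exact hI.mpos, ?_, ?_, ?_,
          fun i => RInv.ext hext (by simp [owner]) (hrs i) (hI.rdr i), fun j' => ?_⟩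
        · intro y
          by_cases hy : y = (c.wst j).mc.widx
          · subst hy
            rw [hsl', Function.update_self, List.map_append]
            exact nodup_concat (hI.nodup _) hfresh
          · rw [hsl', Function.update_of_ne hy]; exact hI.nodup y
        · intro y hy2
          rw [hM] at hy2
          by_cases hy : y = (c.wst j).mc.widx
          · subst hy
            exact absurd W.mcle (by omega)
          · rw [hsl', Function.update_of_ne hy]; exact hI.top y hy2
        · rw [hM]; exact hext.hasW hI.cur
        · by_cases hjj : j' = j
          · subst hjj
            refine ⟨?_, ?_, ?_, ?_, ?_, ?_⟩ <;> rw [hcw]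
            · exact W.mcwf
            · exact W.mc0
            · rw [hM]; exact W.mcle
            · simp
            · simp
            · intro _
              constructor
              · intro x hx
                rcases (ownIn_update hsl' _ _).mp hx with h | ⟨h1, h2⟩
                · exact le_of_lt (W.ownB (Or.inr (Or.inr hpc)) x h)
                · simp only at h1 ⊢
                  omega
              · rw [hsl', Function.update_self, hasW_append]
                simp [Entry.isW]
          · refine WInv.ext hext ?_ (hwo j' hjj) (hI.wtr j')
            simp only [owner, Sum.inr.injEq]
            exact fun h => hjj h
      · refine ⟨hMle, fun h => ?_, fun y => hext.hasW, fun y hf ht => ?_, fun y hw => ?_⟩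
        · rw [hM] at h; exact absurd rfl h
        · by_cases hy : y = (c.wst j).mc.widx
          · subst hy
            exact ⟨⟨Proc.wtr j, j, (c.wst j).v, (c.wst j).toHelp, rfl⟩, W.mcle, hM⟩
          · exfalso
            rw [hsl', Function.update_of_ne hy, hf] at ht
            exact absurd ht (by simp)
        · obtain ⟨p, jj, vv, hh, heq⟩ := hw
          have hy : y = (c.wst j).mc.widx := by
            injection heq with h1 h2 h3
            exact h2.symm
          subst hy
          rw [hsl', Function.update_self, hasW_append]
          simp [Entry.isW]
    | adt a => exact hs.elim


open Classical in
/-- The step changing `M.widx` to `ℓ` (or `0` if there is none). -/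
noncomputable def muF (E : Exec m n v0 j0) (ℓ : ℕ) : ℕ :=
  if h : ∃ t, t < E.len ∧ (ℓ : ℤ) ≤ (E.cfg (t + 1)).M.widx then Nat.find h else 0

open Classical in
/-- The first step after which `SLR[ℓ]` contains a `w`-tuple (or `0`). -/
noncomputable def rhoF (E : Exec m n v0 j0) (ℓ : ℕ) : ℕ :=
  if h : ∃ t, t < E.len ∧ hasW ((E.cfg (t + 1)).slr (ℓ : ℤ)) = true then Nat.find h else 0

theorem muF_spec (E : Exec m n v0 j0) {ℓ : ℕ}
    (h : ∃ t, t < E.len ∧ (ℓ : ℤ) ≤ (E.cfg (t + 1)).M.widx) :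
    muF E ℓ < E.len ∧ (ℓ : ℤ) ≤ (E.cfg (muF E ℓ + 1)).M.widx ∧
    ∀ s, s < muF E ℓ → ¬ ((ℓ : ℤ) ≤ (E.cfg (s + 1)).M.widx) := by
  classical
  rw [muF, dif_pos h]
  obtain ⟨h1, h2⟩ := Nat.find_spec h
  refine ⟨h1, h2, fun s hs hP => ?_⟩
  exact Nat.find_min h hs ⟨lt_trans hs h1, hP⟩

theorem rhoF_spec (E : Exec m n v0 j0) {ℓ : ℕ}
    (h : ∃ t, t < E.len ∧ hasW ((E.cfg (t + 1)).slr (ℓ : ℤ)) = true) :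
    rhoF E ℓ < E.len ∧ hasW ((E.cfg (rhoF E ℓ + 1)).slr (ℓ : ℤ)) = true ∧
    ∀ s, s < rhoF E ℓ → ¬ (hasW ((E.cfg (s + 1)).slr (ℓ : ℤ)) = true) := by
  classical
  rw [rhoF, dif_pos h]
  obtain ⟨h1, h2⟩ := Nat.find_spec h
  refine ⟨h1, h2, fun s hs hP => ?_⟩
  exact Nat.find_min h hs ⟨lt_trans hs h1, hP⟩

end Infra


/-- Lemma `phase`.  Any finite execution of Algorithm 1 can
be decomposed, for some `k ≥ 0`, as `D₀ρ₀E₀μ₁D₁ρ₁E₁…μₖDₖ` (case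
`full = false`) or `D₀ρ₀E₀μ₁D₁ρ₁E₁…μₖDₖρₖEₖ` (case `full = true`), where
`ρ ℓ` is the first step writing a `w`-tuple to `SLR[ℓ]`, `μ ℓ` is the step
changing `M.widx` from `ℓ-1` to `ℓ`, in every configuration of `D ℓ` one has
`M.widx = ℓ = WIDX + 1`, and in every configuration of `E ℓ` one has
`M.widx = ℓ = WIDX` (`WIDX` being the largest index of a sliding register
containing a `w`-tuple). -/
theorem execution_decomposition (m n : ℕ) (v0 : Val) (j0 : Fin n)
    (E : Exec m n v0 j0) :
    ∃ (k : ℕ) (full : Bool) (ρ μ : ℕ → ℕ),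
      -- `ρ ℓ` is the first write of a `w`-tuple to `SLR[ℓ]`
      (∀ ℓ : ℕ, (ℓ < k ∨ (full = true ∧ ℓ = k)) → FirstWWriteAt E (ℓ : ℤ) (ρ ℓ)) ∧
      -- `μ ℓ` changes `M.widx` from `ℓ - 1` to `ℓ`
      (∀ ℓ : ℕ, 0 < ℓ → ℓ ≤ k → WidxChangeAt E (ℓ : ℤ) (μ ℓ)) ∧
      -- the steps alternate: `ρ ℓ` precedes `μ (ℓ+1)`, which precedes `ρ (ℓ+1)`
      (∀ ℓ : ℕ, ℓ + 1 ≤ k → ρ ℓ < μ (ℓ + 1)) ∧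
      (∀ ℓ : ℕ, 0 < ℓ → (ℓ < k ∨ (full = true ∧ ℓ = k)) → μ ℓ < ρ ℓ) ∧
      -- configurations between `μ ℓ` and `ρ ℓ` form `D ℓ`
      (∀ ℓ t : ℕ, ℓ ≤ k → t ≤ E.len →
          (if ℓ = 0 then 0 else μ ℓ + 1) ≤ t →
          t ≤ (if ℓ < k ∨ (full = true ∧ ℓ = k) then ρ ℓ else E.len) →
          inD (E.cfg t) (ℓ : ℤ)) ∧
      -- configurations between `ρ ℓ` and `μ (ℓ+1)` form `E ℓ`
      (∀ ℓ t : ℕ, (ℓ < k ∨ (full = true ∧ ℓ = k)) → t ≤ E.len →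
          ρ ℓ + 1 ≤ t → t ≤ (if ℓ < k then μ (ℓ + 1) else E.len) →
          inE (E.cfg t) (ℓ : ℤ)) := by
  classical
  have hinv : ∀ t, t ≤ E.len → Inv (E.cfg t) := by
    intro t
    induction t with
    | zero => intro _; rw [E.h0]; exact inv_init v0 j0
    | succ s ih =>
      intro hs1
      exact (inv_step (ih (by omega)) (E.hstep s (by omega))).1
  have hfacts : ∀ t, t < E.len → StepFacts (E.cfg t) (E.cfg (t + 1)) (E.lbl t) :=
    fun t ht => (inv_step (hinv t ht.le) (E.hstep t ht)).2
  have hW0 : (E.cfg 0).M.widx = 0 := by rw [E.h0]; rfl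
  have hW0f : ∀ x : ℤ, 0 ≤ x → hasW ((E.cfg 0).slr x) = false := by
    intro x hx
    rw [E.h0]
    show hasW (if x = -1 then _ else []) = false
    rw [if_neg (by omega)]
    rfl
  have hWmono : ∀ s t, s ≤ t → t ≤ E.len → (E.cfg s).M.widx ≤ (E.cfg t).M.widx := by
    intro s t hst htl
    induction t with
    | zero =>
      have : s = 0 := Nat.le_zero.mp hst
      subst this; exact le_refl _
    | succ u ih =>
      by_cases hsu : s = u + 1
      · subst hsu; exact le_refl _
      · exact (ih (by omega) (by omega)).trans (hfacts u (by omega)).1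
  have hhWmono : ∀ (x : ℤ) s t, s ≤ t → t ≤ E.len →
      hasW ((E.cfg s).slr x) = true → hasW ((E.cfg t).slr x) = true := by
    intro x s t hst htl hw
    induction t with
    | zero =>
      have : s = 0 := Nat.le_zero.mp hst
      subst this; exact hw
    | succ u ih =>
      by_cases hsu : s = u + 1
      · subst hsu; exact hw
      · exact (hfacts u (by omega)).2.2.1 x (ih (by omega) (by omega))
  have hk0 : (0:ℤ) ≤ (E.cfg E.len).M.widx := (hinv E.len le_rfl).mpos
  set k : ℕ := ((E.cfg E.len).M.widx).toNat with hkdef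
  have hkK : (k : ℤ) = (E.cfg E.len).M.widx := Int.toNat_of_nonneg hk0
  set full : Bool := hasW ((E.cfg E.len).slr (k : ℤ)) with hfdef
  -- properties of μ
  have hμP : ∀ ℓ : ℕ, 0 < ℓ → (ℓ:ℤ) ≤ (E.cfg E.len).M.widx →
      muF E ℓ < E.len ∧ (E.cfg (muF E ℓ)).M.widx = (ℓ:ℤ) - 1 ∧
      (E.cfg (muF E ℓ + 1)).M.widx = (ℓ:ℤ) ∧
      (∃ p v, E.lbl (muF E ℓ) = Lbl.mWrite p v) ∧
      hasW ((E.cfg (muF E ℓ)).slr ((ℓ:ℤ) - 1)) = true := by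
    intro ℓ h1 h2
    have hex : ∃ t, t < E.len ∧ (ℓ:ℤ) ≤ (E.cfg (t + 1)).M.widx := by
      have hex0 : ∃ t, t ≤ E.len ∧ (ℓ:ℤ) ≤ (E.cfg t).M.widx := ⟨E.len, le_rfl, h2⟩
      have hspec := Nat.find_spec hex0
      cases ht0 : Nat.find hex0 with
      | zero =>
        rw [ht0] at hspec
        have := hspec.2
        rw [hW0] at this
        exfalso; omega
      | succ s =>
        rw [ht0] at hspec
        have hl : s + 1 ≤ E.len := hspec.1
        exact ⟨s, by omega, hspec.2⟩
    obtain ⟨hlt, hP, hmin⟩ := muF_spec E hex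
    have hWlt : (E.cfg (muF E ℓ)).M.widx < (ℓ:ℤ) := by
      cases hm : muF E ℓ with
      | zero =>
        rw [hW0]
        omega
      | succ s =>
        have := hmin s (by omega)
        omega
    have hne : (E.cfg (muF E ℓ + 1)).M.widx ≠ (E.cfg (muF E ℓ)).M.widx := by omega
    obtain ⟨hmw, hhw, heq⟩ := (hfacts (muF E ℓ) hlt).2.1 hne
    have hWm : (E.cfg (muF E ℓ)).M.widx = (ℓ:ℤ) - 1 := by omega
    exact ⟨hlt, hWm, by omega, hmw, by rw [← hWm]; exact hhw⟩
  have hμchar : ∀ ℓ : ℕ, 0 < ℓ → (ℓ:ℤ) ≤ (E.cfg E.len).M.widx → ∀ t, t ≤ E.len →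
      ((ℓ:ℤ) ≤ (E.cfg t).M.widx ↔ muF E ℓ + 1 ≤ t) := by
    intro ℓ h1 h2 t htl
    obtain ⟨hlt, hWm, hW1, _, _⟩ := hμP ℓ h1 h2
    constructor
    · intro hWt
      by_contra hc
      push_neg at hc
      have := hWmono t (muF E ℓ) (by omega) hlt.le
      omega
    · intro h
      have := hWmono (muF E ℓ + 1) t h htl
      omega
  -- properties of ρ
  have hρP : ∀ ℓ : ℕ, (∃ t, t < E.len ∧ hasW ((E.cfg (t + 1)).slr (ℓ:ℤ)) = true) →
      rhoF E ℓ < E.len ∧ FirstWWriteAt E (ℓ:ℤ) (rhoF E ℓ) ∧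
      (ℓ:ℤ) ≤ (E.cfg (rhoF E ℓ)).M.widx ∧
      ∀ t, t ≤ E.len → (hasW ((E.cfg t).slr (ℓ:ℤ)) = true ↔ rhoF E ℓ + 1 ≤ t) := by
    intro ℓ hex
    obtain ⟨hlt, hP, hmin⟩ := rhoF_spec E hex
    have hz : hasW ((E.cfg 0).slr (ℓ:ℤ)) = false := hW0f _ (Int.natCast_nonneg ℓ)
    have hfr : hasW ((E.cfg (rhoF E ℓ)).slr (ℓ:ℤ)) = false := by
      cases hm : rhoF E ℓ with
      | zero => exact hz
      | succ s =>
        have hns := hmin s (by omega)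
        rcases Bool.eq_false_or_eq_true (hasW ((E.cfg (s + 1)).slr (ℓ:ℤ))) with h | h
        · exact absurd h hns
        · exact h
    obtain ⟨hww, hle, hMe⟩ := (hfacts (rhoF E ℓ) hlt).2.2.2.1 (ℓ:ℤ) hfr hP
    refine ⟨hlt, ⟨hlt, hww, ?_⟩, hle, fun t htl => ⟨?_, ?_⟩⟩
    · intro t' ht' hww'
      have := (hfacts t' (by omega)).2.2.2.2 (ℓ:ℤ) hww'
      exact absurd this (hmin t' ht')
    · intro hT
      by_contra hc
      push_neg at hc
      cases t with
      | zero =>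
        rw [hT] at hz
        simp at hz
      | succ s =>
        exact absurd hT (hmin s (by omega))
    · intro h
      exact hhWmono (ℓ:ℤ) (rhoF E ℓ + 1) t h htl hP
  have hρcond : ∀ ℓ : ℕ, (ℓ < k ∨ (full = true ∧ ℓ = k)) →
      ∃ t, t < E.len ∧ hasW ((E.cfg (t + 1)).slr (ℓ:ℤ)) = true := by
    intro ℓ hl
    have hstep : ∀ t, t ≤ E.len → hasW ((E.cfg t).slr (ℓ:ℤ)) = true →
        ∃ t', t' < E.len ∧ hasW ((E.cfg (t' + 1)).slr (ℓ:ℤ)) = true := by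
      intro t htl hw
      cases t with
      | zero =>
        have hz := hW0f (ℓ:ℤ) (Int.natCast_nonneg ℓ)
        rw [hw] at hz
        simp at hz
      | succ s => exact ⟨s, by omega, hw⟩
    rcases hl with hl | ⟨hf, hl⟩
    · have h2 : ((ℓ:ℕ) + 1 : ℤ) ≤ (E.cfg E.len).M.widx := by omega
      obtain ⟨hlt, hWm, hW1, _, hhw⟩ := hμP (ℓ + 1) (by omega) (by push_cast; omega)
      have hcast : (((ℓ:ℕ) + 1 : ℕ) : ℤ) - 1 = (ℓ:ℤ) := by push_cast; ring
      rw [hcast] at hhw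
      exact hstep (muF E (ℓ + 1)) hlt.le hhw
    · subst hl
      rw [hfdef] at hf
      exact hstep E.len le_rfl hf
  -- region dichotomy
  have hD : ∀ t, t ≤ E.len → ∀ ℓ : ℤ, (E.cfg t).M.widx = ℓ →
      hasW ((E.cfg t).slr ℓ) = false → inD (E.cfg t) ℓ := by
    intro t htl ℓ hw hf
    have I := hinv t htl
    have hc := I.cur
    rw [hw] at hc
    refine ⟨hw, hc, fun y hy => ?_⟩
    by_cases hyl : y = ℓ
    · subst hyl; exact hf
    · exact I.top y (by omega)
  have hE : ∀ t, t ≤ E.len → ∀ ℓ : ℤ, (E.cfg t).M.widx = ℓ →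
      hasW ((E.cfg t).slr ℓ) = true → inE (E.cfg t) ℓ := by
    intro t htl ℓ hw ht
    have I := hinv t htl
    exact ⟨hw, ht, fun y hy => I.top y (by omega)⟩
  -- the four ordering facts
  have hc3 : ∀ ℓ : ℕ, ℓ + 1 ≤ k → rhoF E ℓ < muF E (ℓ + 1) := by
    intro ℓ hl
    obtain ⟨hlt, hWm, hW1, _, hhw⟩ := hμP (ℓ + 1) (by omega) (by push_cast; omega)
    have hcast : (((ℓ:ℕ) + 1 : ℕ) : ℤ) - 1 = (ℓ:ℤ) := by push_cast; ring
    rw [hcast] at hhw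
    have hchar := (hρP ℓ (hρcond ℓ (Or.inl (by omega)))).2.2.2 (muF E (ℓ + 1)) hlt.le
    have := hchar.mp hhw
    omega
  have hc4 : ∀ ℓ : ℕ, 0 < ℓ → (ℓ < k ∨ (full = true ∧ ℓ = k)) → muF E ℓ < rhoF E ℓ := by
    intro ℓ h0 hl
    obtain ⟨hρlt, _, hρW, _⟩ := hρP ℓ (hρcond ℓ hl)
    have hlk : (ℓ:ℤ) ≤ (E.cfg E.len).M.widx := by
      rcases hl with h | ⟨_, h⟩ <;> omega
    have := (hμchar ℓ h0 hlk (rhoF E ℓ) hρlt.le).mp hρW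
    omega
  refine ⟨k, full, rhoF E, muF E, ?_, ?_, ?_, hc4, ?_, ?_⟩
  · -- ρ is the first w-write
    intro ℓ hl
    exact (hρP ℓ (hρcond ℓ hl)).2.1
  · -- μ changes widx
    intro ℓ h0 hlk
    obtain ⟨hlt, hWm, hW1, hmw, _⟩ := hμP ℓ h0 (by omega)
    exact ⟨hlt, hmw, hWm, hW1⟩
  · exact hc3
  · -- D region
    intro ℓ t hlk htlen hlow hup
    have hfW : hasW ((E.cfg t).slr (ℓ:ℤ)) = false := by
      by_cases hcond : ℓ < k ∨ (full = true ∧ ℓ = k)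
      · rw [if_pos hcond] at hup
        have hchar := (hρP ℓ (hρcond ℓ hcond)).2.2.2 t htlen
        rcases Bool.eq_false_or_eq_true (hasW ((E.cfg t).slr (ℓ:ℤ))) with h | h
        · have := hchar.mp h
          omega
        · exact h
      · rw [if_neg hcond] at hup
        push_neg at hcond
        have hlek : ℓ = k := by omega
        have hfull : full = false := by
          rcases Bool.eq_false_or_eq_true full with h | h
          · exact absurd hlek (hcond.2 h)
          · exact h
        rw [hfdef] at hfull
        rcases Bool.eq_false_or_eq_true (hasW ((E.cfg t).slr (ℓ:ℤ))) with h | h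
        · have hlen := hhWmono (ℓ:ℤ) t E.len htlen le_rfl h
          rw [hlek] at hlen
          rw [hlen] at hfull
          simp at hfull
        · exact h
    have hge : (ℓ:ℤ) ≤ (E.cfg t).M.widx := by
      by_cases h0 : ℓ = 0
      · subst h0
        have := (hinv t htlen).mpos
        omega
      · rw [if_neg h0] at hlow
        exact ((hμchar ℓ (by omega) (by omega)) t htlen).mpr hlow
    have hle : (E.cfg t).M.widx ≤ (ℓ:ℤ) := by
      by_contra hgt
      push_neg at hgt
      have hWK : (E.cfg t).M.widx ≤ (E.cfg E.len).M.widx := hWmono t E.len htlen le_rfl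
      have hl1k : ℓ + 1 ≤ k := by omega
      have ht1 : muF E (ℓ + 1) + 1 ≤ t :=
        (hμchar (ℓ + 1) (by omega) (by push_cast; omega) t htlen).mp (by push_cast; omega)
      have hρμ := hc3 ℓ hl1k
      have hT := ((hρP ℓ (hρcond ℓ (Or.inl (by omega)))).2.2.2 t htlen).mpr (by omega)
      rw [hT] at hfW
      simp at hfW
    exact hD t htlen (ℓ:ℤ) (by omega) hfW
  · -- E region
    intro ℓ t hcond htlen hlow hup
    have hT : hasW ((E.cfg t).slr (ℓ:ℤ)) = true :=
      ((hρP ℓ (hρcond ℓ hcond)).2.2.2 t htlen).mpr hlow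
    have hge : (ℓ:ℤ) ≤ (E.cfg t).M.widx := by
      by_contra h
      push_neg at h
      have := (hinv t htlen).top (ℓ:ℤ) h
      rw [hT] at this
      simp at this
    have hle : (E.cfg t).M.widx ≤ (ℓ:ℤ) := by
      by_cases hlk : ℓ < k
      · rw [if_pos hlk] at hup
        by_contra hgt
        push_neg at hgt
        have := (hμchar (ℓ + 1) (by omega) (by push_cast; omega) t htlen).mp (by push_cast; omega)
        omega
      · have hWK : (E.cfg t).M.widx ≤ (E.cfg E.len).M.widx := hWmono t E.len htlen le_rfl
        have hlek : ℓ = k := by rcases hcond with h | ⟨_, h⟩ <;> omega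
        omega
    exact hE t htlen (ℓ:ℤ) (by omega) hT


end Alg1
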